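/- arXiv:2407.17660 — 3 statements merged into one kernel-verified Lean document; each statement's English description precedes it below -/
import Mathlib

section
/- For any n-admissible k-tuple (α_1,…,α_k) of elements of NCP(n), one has α_1 ∘ ⋯ ∘ α_k = ((α_1 ∗_n ⋯ ∗_n α_k) ∨ {{1,…,k},{k+1,…,2k},…,{kn−k+1,…,kn}})^{1/k}. -/
open scoped BigOperators

/-- A partition (setoid) of `Fin N` is noncrossing if there are no
`a < b < c < d` with `a ~ c`, `b ~ d` but `a ≁ b`. -/
def IsNoncrossing {N : ℕ} (π : Setoid (Fin N)) : Prop :=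
  ∀ a b c d : Fin N, a < b → b < c → c < d → π a c → π b d → π a b

/-- The set of noncrossing partitions of `[N] = {1,…,N}`, modelled as
noncrossing setoids on `Fin N`. -/
abbrev NCP (N : ℕ) : Type := {π : Setoid (Fin N) // IsNoncrossing π}

theorem bot_isNoncrossing (N : ℕ) : IsNoncrossing (⊥ : Setoid (Fin N)) := by
  intro a b c d hab hbc hcd hac _
  have h : a = c := by
    have := Setoid.bot_def (α := Fin N)
    exact by rw [show ((⊥ : Setoid (Fin N)) : Fin N → Fin N → Prop) = (· = ·) from this] at hac; exact hac
  exact absurd (h ▸ (hab.trans hbc)) (lt_irrefl a)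

theorem top_isNoncrossing (N : ℕ) : IsNoncrossing (⊤ : Setoid (Fin N)) := by
  intro a b c d _ _ _ _ _
  show (⊤ : Setoid (Fin N)) a b
  rw [show ((⊤ : Setoid (Fin N)) : Fin N → Fin N → Prop) = ⊤ from Setoid.top_def]
  trivial

theorem inf_isNoncrossing {N : ℕ} {π μ : Setoid (Fin N)}
    (hπ : IsNoncrossing π) (hμ : IsNoncrossing μ) : IsNoncrossing (π ⊓ μ) := by
  intro a b c d hab hbc hcd hac hbd
  have hac' : π a c ∧ μ a c := by
    rw [show ((π ⊓ μ : Setoid (Fin N)) : Fin N → Fin N → Prop) = ⇑π ⊓ ⇑μ from Setoid.inf_def] at hac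
    exact hac
  have hbd' : π b d ∧ μ b d := by
    rw [show ((π ⊓ μ : Setoid (Fin N)) : Fin N → Fin N → Prop) = ⇑π ⊓ ⇑μ from Setoid.inf_def] at hbd
    exact hbd
  show (π ⊓ μ) a b
  rw [show ((π ⊓ μ : Setoid (Fin N)) : Fin N → Fin N → Prop) = ⇑π ⊓ ⇑μ from Setoid.inf_def]
  exact ⟨hπ a b c d hab hbc hcd hac'.1 hbd'.1, hμ a b c d hab hbc hcd hac'.2 hbd'.2⟩

/-- The join of two partitions in the lattice of noncrossing partitions:
the finest noncrossing partition coarser than both. -/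
def ncSup {N : ℕ} (π μ : Setoid (Fin N)) : Setoid (Fin N) :=
  sInf {γ : Setoid (Fin N) | IsNoncrossing γ ∧ π ≤ γ ∧ μ ≤ γ}

theorem ncSup_isNoncrossing {N : ℕ} (π μ : Setoid (Fin N)) : IsNoncrossing (ncSup π μ) := by
  intro a b c d hab hbc hcd hac hbd
  rw [ncSup, Setoid.sInf_iff] at hac hbd ⊢
  intro γ hγ
  exact hγ.1 a b c d hab hbc hcd (hac γ hγ) (hbd γ hγ)

noncomputable instance NCP.instLattice (N : ℕ) : Lattice (NCP N) :=
  { (inferInstance : PartialOrder (NCP N)) with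
    sup := fun α β => ⟨ncSup α.1 β.1, ncSup_isNoncrossing _ _⟩
    inf := fun α β => ⟨α.1 ⊓ β.1, inf_isNoncrossing α.2 β.2⟩
    le_sup_left := fun α β => by
      show α.1 ≤ ncSup α.1 β.1
      exact le_sInf fun γ hγ => hγ.2.1
    le_sup_right := fun α β => by
      show β.1 ≤ ncSup α.1 β.1
      exact le_sInf fun γ hγ => hγ.2.2
    sup_le := fun α β γ h1 h2 => by
      show ncSup α.1 β.1 ≤ γ.1
      exact sInf_le ⟨γ.2, h1, h2⟩
    inf_le_left := fun α β => by
      show α.1 ⊓ β.1 ≤ α.1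
      exact inf_le_left
    inf_le_right := fun α β => by
      show α.1 ⊓ β.1 ≤ β.1
      exact inf_le_right
    le_inf := fun α β γ h1 h2 => by
      show α.1 ≤ β.1 ⊓ γ.1
      exact le_inf h1 h2 }

instance NCP.instOrderBot (N : ℕ) : OrderBot (NCP N) where
  bot := ⟨⊥, bot_isNoncrossing N⟩
  bot_le := fun α => by
    show (⊥ : Setoid (Fin N)) ≤ α.1
    exact bot_le

instance NCP.instOrderTop (N : ℕ) : OrderTop (NCP N) where
  top := ⟨⊤, top_isNoncrossing N⟩
  le_top := fun α => by
    show α.1 ≤ (⊤ : Setoid (Fin N))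
    exact le_top

/-- The disjoint sum of two setoids: elements are related iff they lie on
the same side and are related there. -/
def sumSetoid {A B : Type*} (α : Setoid A) (β : Setoid B) : Setoid (A ⊕ B) where
  r x y := match x, y with
    | Sum.inl a, Sum.inl a' => α a a'
    | Sum.inr b, Sum.inr b' => β b b'
    | _, _ => False
  iseqv := by
    constructor
    · intro x
      cases x with
      | inl a => exact α.refl' a
      | inr b => exact β.refl' b
    · intro x y h
      cases x <;> cases y <;>
        first
          | exact α.symm' h
          | exact β.symm' h
          | exact h.elim
    · intro x y z h1 h2
      cases x <;> cases y <;> cases z <;>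
        first
          | exact α.trans' h1 h2
          | exact β.trans' h1 h2
          | exact h1.elim
          | exact h2.elim

/-- Decoding map for the `n`-perfect shuffle of a partition of `[n]`
(placed on odd positions) and a partition of `[n]` (placed on even positions). -/
def decode2 (n : ℕ) (x : Fin (2*n)) : Fin n ⊕ Fin n :=
  if (x : ℕ) % 2 = 0 then Sum.inl ⟨(x:ℕ)/2, by have := x.isLt; omega⟩
  else Sum.inr ⟨(x:ℕ)/2, by have := x.isLt; omega⟩

/-- The `n`-perfect shuffle `α ∗_n β` of two partitions of `[n]`, a partition
of `[2n]`. -/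
def shuffle2 {n : ℕ} (α β : Setoid (Fin n)) : Setoid (Fin (2*n)) :=
  Setoid.comap (decode2 n) (sumSetoid α β)

/-- The pair `(α, β)` is `n`-admissible if the `n`-perfect shuffle `α ∗_n β`
is noncrossing. -/
def Admissible2 {n : ℕ} (α β : NCP n) : Prop := IsNoncrossing (shuffle2 α.1 β.1)

/-- The `p`-th power of a partition of `[n]`: each element is replicated `p`
times, all replicas being put in the same block. -/
def powSetoid (p : ℕ) {n : ℕ} (π : Setoid (Fin n)) : Setoid (Fin (p*n)) :=
  Setoid.comap (fun x : Fin (p*n) =>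
    (⟨(x:ℕ)/p, by
        have hx := x.isLt
        rcases Nat.eq_zero_or_pos p with h|h
        · subst h; exact absurd hx (by omega)
        · exact Nat.div_lt_of_lt_mul hx⟩ : Fin n)) π

theorem isNoncrossing_comap_of_monotone {M N : ℕ} (f : Fin M → Fin N) (hf : Monotone f)
    {π : Setoid (Fin N)} (hπ : IsNoncrossing π) : IsNoncrossing (Setoid.comap f π) := by
  intro a b c d hab hbc hcd hac hbd
  have h1 : f a ≤ f b := hf hab.le
  have h2 : f b ≤ f c := hf hbc.le
  have h3 : f c ≤ f d := hf hcd.le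
  show π (f a) (f b)
  have hac' : π (f a) (f c) := hac
  have hbd' : π (f b) (f d) := hbd
  rcases eq_or_lt_of_le h1 with e1 | l1
  · rw [← e1]
  · rcases eq_or_lt_of_le h2 with e2 | l2
    · rw [e2]; exact hac'
    · rcases eq_or_lt_of_le h3 with e3 | l3
      · rw [← e3] at hbd'
        exact π.trans' hac' (π.symm' hbd')
      · exact hπ (f a) (f b) (f c) (f d) l1 l2 l3 hac' hbd'

theorem powSetoid_isNoncrossing (p : ℕ) {n : ℕ} (π : NCP n) :
    IsNoncrossing (powSetoid p π.1) :=
  isNoncrossing_comap_of_monotone _ (fun x y h => by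
    simp only [Fin.mk_le_mk]
    exact Nat.div_le_div_right h) π.2

/-- The `p`-th power map `NCP n → NCP (p·n)`. -/
def npow (p : ℕ) {n : ℕ} (π : NCP n) : NCP (p*n) := ⟨powSetoid p π.1, powSetoid_isNoncrossing p π⟩

open Classical in
/-- The `p`-th root `π^{1/p}` of a partition of `[pn]`: the unique preimage
under the `p`-th power map when it exists (junk value `⊥` otherwise). -/
noncomputable def nroot (p n : ℕ) (π : Setoid (Fin (p*n))) : NCP n :=
  if h : ∃ σ : NCP n, (npow p σ).1 = π then h.choose else ⊥

/-- The interval partition `{{1,…,p},{p+1,…,2p},…,{pn−p+1,…,pn}}` of `[pn]`. -/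
def intervalSetoid (p n : ℕ) : Setoid (Fin (p*n)) :=
  Setoid.ker (fun x : Fin (p*n) => (x:ℕ)/p)

theorem intervalSetoid_isNoncrossing (p n : ℕ) : IsNoncrossing (intervalSetoid p n) := by
  intro a b c d hab hbc hcd hac _
  have h1 : (a:ℕ)/p = (c:ℕ)/p := hac
  have h2 : (a:ℕ)/p ≤ (b:ℕ)/p := Nat.div_le_div_right (le_of_lt hab)
  have h3 : (b:ℕ)/p ≤ (c:ℕ)/p := Nat.div_le_div_right (le_of_lt hbc)
  show (a:ℕ)/p = (b:ℕ)/p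
  exact le_antisymm h2 (by rw [h1]; exact h3)

/-- The interval partition as a noncrossing partition. -/
def intervalNCP (p n : ℕ) : NCP (p*n) := ⟨intervalSetoid p n, intervalSetoid_isNoncrossing p n⟩

/-- The composition product `α ∘ β := ((α ⧢_n β) ∨ {{1,2},…,{2n−1,2n}})^{1/2}`,
defined (meaningfully) on `n`-admissible pairs. -/
noncomputable def comp {n : ℕ} (α β : NCP n) : NCP n :=
  nroot 2 n (ncSup (shuffle2 α.1 β.1) (intervalSetoid 2 n))

open Classical in
/-- The Kreweras complement: the unique `γ` with `(α, γ)` admissible and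
`α ∘ γ = 1_n`. -/
noncomputable def kreweras {n : ℕ} (α : NCP n) : NCP n :=
  if h : ∃ γ : NCP n, Admissible2 α γ ∧ comp α γ = ⊤ then h.choose else ⊥

open Classical in
/-- The relative Kreweras complement `K_β(α)`: the unique `γ` with `(α, γ)`
admissible and `α ∘ γ = β`. -/
noncomputable def relKreweras {n : ℕ} (β α : NCP n) : NCP n :=
  if h : ∃ γ : NCP n, Admissible2 α γ ∧ comp α γ = β then h.choose else ⊥

/-- Iterated (left-associated) composition product `α_1 ∘ ⋯ ∘ α_k`. -/
noncomputable def compTuple {n : ℕ} : {k : ℕ} → (Fin k → NCP n) → NCP n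
  | 0, _ => ⊥
  | k+1, α => comp (compTuple (fun i : Fin k => α i.castSucc)) (α (Fin.last k))

/-- The `k`-fold `n`-perfect shuffle `α_1 ∗_n ⋯ ∗_n α_k` of `k` partitions of `[n]`,
a partition of `[kn]`. -/
def eqShuffle (n k : ℕ) (α : Fin k → Setoid (Fin n)) : Setoid (Fin (k*n)) where
  r x y := ∃ i : Fin k, ((x:ℕ) % k = (i:ℕ)) ∧ ((y:ℕ) % k = (i:ℕ)) ∧
      (α i) ⟨(x:ℕ)/k, Nat.div_lt_of_lt_mul x.isLt⟩ ⟨(y:ℕ)/k, Nat.div_lt_of_lt_mul y.isLt⟩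
  iseqv := by
    constructor
    · intro x
      have h0 : 0 < k * n := lt_of_le_of_lt (Nat.zero_le _) x.isLt
      have hk : 0 < k := by
        rcases Nat.eq_zero_or_pos k with h|h
        · subst h; rw [Nat.zero_mul] at h0; exact absurd h0 (lt_irrefl 0)
        · exact h
      exact ⟨⟨(x:ℕ) % k, Nat.mod_lt _ hk⟩, rfl, rfl, (α _).refl' _⟩
    · rintro x y ⟨i, h1, h2, h3⟩
      exact ⟨i, h2, h1, (α i).symm' h3⟩
    · rintro x y z ⟨i, h1, h2, h3⟩ ⟨j, h4, h5, h6⟩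
      obtain rfl : i = j := Fin.ext (by rw [← h2, h4])
      exact ⟨i, h1, h5, (α i).trans' h3 h6⟩

/-- A `k`-tuple of noncrossing partitions of `[n]` is `n`-admissible if its
`k`-fold perfect shuffle is noncrossing. -/
def AdmissibleTuple (n k : ℕ) (α : Fin k → NCP n) : Prop :=
  IsNoncrossing (eqShuffle n k fun i => (α i).1)

-- ===== Auxiliary material =====

theorem sInf_isNoncrossing' {N : ℕ} (S : Set (Setoid (Fin N)))
    (hS : ∀ γ ∈ S, IsNoncrossing γ) : IsNoncrossing (sInf S) := by
  intro a b c d hab hbc hcd hac hbd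
  rw [Setoid.sInf_iff] at hac hbd ⊢
  intro γ hγ
  exact hS γ hγ a b c d hab hbc hcd (hac γ hγ) (hbd γ hγ)

theorem rel_mk_iff {n : ℕ} (σ : Setoid (Fin n)) {a b : Fin n} {x y : ℕ} {hx : x < n} {hy : y < n}
    (ha : x = (a : ℕ)) (hb : y = (b : ℕ)) : σ ⟨x, hx⟩ ⟨y, hy⟩ ↔ σ a b := by
  obtain rfl : (⟨x, hx⟩ : Fin n) = a := Fin.ext ha
  obtain rfl : (⟨y, hy⟩ : Fin n) = b := Fin.ext hb
  exact Iff.rfl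

theorem powSetoid_rel_iff {p n : ℕ} (σ : Setoid (Fin n)) {x y : Fin (p*n)} {a b : Fin n}
    (ha : (x : ℕ)/p = (a : ℕ)) (hb : (y : ℕ)/p = (b : ℕ)) :
    powSetoid p σ x y ↔ σ a b :=
  rel_mk_iff σ ha hb

/-- the set of noncrossing partitions whose `p`-th power dominates `X` -/
def TSet (p n : ℕ) (X : Setoid (Fin (p*n))) : Set (Setoid (Fin n)) :=
  {σ | IsNoncrossing σ ∧ X ≤ powSetoid p σ}

def Troot (p n : ℕ) (X : Setoid (Fin (p*n))) : Setoid (Fin n) := sInf (TSet p n X)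

theorem Troot_isNoncrossing (p n : ℕ) (X : Setoid (Fin (p*n))) : IsNoncrossing (Troot p n X) :=
  sInf_isNoncrossing' _ fun _ hγ => hγ.1

/-- the embedding `a ↦ a·p` of `Fin n` into `Fin (p·n)` -/
def emb (p n : ℕ) (hp : 0 < p) (a : Fin n) : Fin (p*n) :=
  ⟨(a : ℕ) * p, by
    have := a.isLt
    calc (a : ℕ) * p < n * p := by exact (Nat.mul_lt_mul_right hp).mpr this
    _ = p * n := Nat.mul_comm _ _⟩

theorem emb_div {p n : ℕ} (hp : 0 < p) (a : Fin n) : ((emb p n hp a : Fin (p*n)) : ℕ) / p = a :=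
  Nat.mul_div_cancel _ hp

theorem pow_comap_emb {p n : ℕ} (hp : 0 < p) {γ : Setoid (Fin (p*n))}
    (hI : intervalSetoid p n ≤ γ) :
    powSetoid p (Setoid.comap (emb p n hp) γ) = γ := by
  apply Setoid.ext
  intro x y
  have hx : γ x (emb p n hp ⟨(x:ℕ)/p, Nat.div_lt_of_lt_mul x.isLt⟩) := by
    apply Setoid.le_def.mp hI
    show (x : ℕ)/p = ((x:ℕ)/p * p)/p
    rw [Nat.mul_div_cancel _ hp]
  have hy : γ y (emb p n hp ⟨(y:ℕ)/p, Nat.div_lt_of_lt_mul y.isLt⟩) := by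
    apply Setoid.le_def.mp hI
    show (y : ℕ)/p = ((y:ℕ)/p * p)/p
    rw [Nat.mul_div_cancel _ hp]
  constructor
  · intro h
    have h' : γ (emb p n hp ⟨(x:ℕ)/p, Nat.div_lt_of_lt_mul x.isLt⟩)
        (emb p n hp ⟨(y:ℕ)/p, Nat.div_lt_of_lt_mul y.isLt⟩) := h
    exact γ.trans' hx (γ.trans' h' (γ.symm' hy))
  · intro h
    show γ (emb p n hp _) (emb p n hp _)
    exact γ.trans' (γ.symm' hx) (γ.trans' h hy)

theorem interval_le_pow {p n : ℕ} (σ : Setoid (Fin n)) :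
    intervalSetoid p n ≤ powSetoid p σ := by
  rw [Setoid.le_def]
  intro x y hxy
  have hxy' : (x : ℕ)/p = (y : ℕ)/p := hxy
  show σ ⟨(x:ℕ)/p, Nat.div_lt_of_lt_mul x.isLt⟩ ⟨(y:ℕ)/p, Nat.div_lt_of_lt_mul y.isLt⟩
  have e : (⟨(x:ℕ)/p, Nat.div_lt_of_lt_mul x.isLt⟩ : Fin n)
      = ⟨(y:ℕ)/p, Nat.div_lt_of_lt_mul y.isLt⟩ := Fin.ext hxy'
  rw [e]

/-- Structure theorem: the noncrossing join of anything with the interval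
partition is the `p`-th power of `Troot`. -/
theorem ncSup_interval_eq_pow {p n : ℕ} (hp : 0 < p) (X : Setoid (Fin (p*n))) :
    ncSup X (intervalSetoid p n) = powSetoid p (Troot p n X) := by
  apply le_antisymm
  · apply sInf_le
    refine ⟨powSetoid_isNoncrossing p ⟨Troot p n X, Troot_isNoncrossing p n X⟩, ?_, interval_le_pow _⟩
    rw [Setoid.le_def]
    intro x y hxy
    show Troot p n X ⟨(x:ℕ)/p, _⟩ ⟨(y:ℕ)/p, _⟩
    rw [Troot, Setoid.sInf_iff]
    intro σ hσ
    exact Setoid.le_def.mp hσ.2 hxy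
  · apply le_sInf
    rintro γ ⟨hγnc, hγX, hγI⟩
    have hmono : Monotone (emb p n hp) := by
      intro a b hab
      show (a : ℕ) * p ≤ (b : ℕ) * p
      exact Nat.mul_le_mul_right p hab
    have hmem : Setoid.comap (emb p n hp) γ ∈ TSet p n X := by
      refine ⟨isNoncrossing_comap_of_monotone _ hmono hγnc, ?_⟩
      rw [pow_comap_emb hp hγI]
      exact hγX
    rw [Setoid.le_def]
    intro x y hxy
    have h1 : Troot p n X ⟨(x:ℕ)/p, Nat.div_lt_of_lt_mul x.isLt⟩
        ⟨(y:ℕ)/p, Nat.div_lt_of_lt_mul y.isLt⟩ := hxy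
    rw [Troot, Setoid.sInf_iff] at h1
    have h2 := h1 _ hmem
    have h3 : γ (emb p n hp ⟨(x:ℕ)/p, Nat.div_lt_of_lt_mul x.isLt⟩)
        (emb p n hp ⟨(y:ℕ)/p, Nat.div_lt_of_lt_mul y.isLt⟩) := h2
    have hx : γ x (emb p n hp ⟨(x:ℕ)/p, Nat.div_lt_of_lt_mul x.isLt⟩) := by
      apply Setoid.le_def.mp hγI
      show (x : ℕ)/p = ((x:ℕ)/p * p)/p
      rw [Nat.mul_div_cancel _ hp]
    have hy : γ y (emb p n hp ⟨(y:ℕ)/p, Nat.div_lt_of_lt_mul y.isLt⟩) := by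
      apply Setoid.le_def.mp hγI
      show (y : ℕ)/p = ((y:ℕ)/p * p)/p
      rw [Nat.mul_div_cancel _ hp]
    exact γ.trans' hx (γ.trans' h3 (γ.symm' hy))

theorem nroot_pow {p n : ℕ} (hp : 0 < p) (σ : NCP n) :
    nroot p n (powSetoid p σ.1) = σ := by
  have hinj : ∀ σ' : NCP n, (npow p σ').1 = powSetoid p σ.1 → σ' = σ := by
    intro σ' hE
    apply Subtype.ext
    apply Setoid.ext
    intro a b
    have h1 : powSetoid p σ'.1 (emb p n hp a) (emb p n hp b) ↔ σ'.1 a b :=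
      powSetoid_rel_iff _ (emb_div hp a) (emb_div hp b)
    have h2 : powSetoid p σ.1 (emb p n hp a) (emb p n hp b) ↔ σ.1 a b :=
      powSetoid_rel_iff _ (emb_div hp a) (emb_div hp b)
    rw [← h1, ← h2]
    show (npow p σ').1 _ _ ↔ _
    rw [hE]
  have hex : ∃ σ' : NCP n, (npow p σ').1 = powSetoid p σ.1 := ⟨σ, rfl⟩
  unfold nroot
  rw [dif_pos hex]
  exact hinj _ hex.choose_spec

theorem shuffle2_le_pow_iff {n : ℕ} (ρ β σ : Setoid (Fin n)) :
    shuffle2 ρ β ≤ powSetoid 2 σ ↔ ρ ≤ σ ∧ β ≤ σ := by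
  constructor
  · intro h
    constructor
    · rw [Setoid.le_def]
      intro a b hab
      have ha : 2*(a:ℕ) < 2*n := by have := a.isLt; omega
      have hb : 2*(b:ℕ) < 2*n := by have := b.isLt; omega
      have h1 : shuffle2 ρ β ⟨2*(a:ℕ), ha⟩ ⟨2*(b:ℕ), hb⟩ := by
        show sumSetoid ρ β (decode2 n _) (decode2 n _)
        have e1 : decode2 n ⟨2*(a:ℕ), ha⟩ = Sum.inl a := by
          unfold decode2
          have h0 : ((⟨2*(a:ℕ), ha⟩ : Fin (2*n)) : ℕ) % 2 = 0 := by
            show 2*(a:ℕ) % 2 = 0; omega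
          rw [if_pos h0]
          congr 1
          apply Fin.ext
          show 2*(a:ℕ)/2 = (a:ℕ)
          omega
        have e2 : decode2 n ⟨2*(b:ℕ), hb⟩ = Sum.inl b := by
          unfold decode2
          have h0 : ((⟨2*(b:ℕ), hb⟩ : Fin (2*n)) : ℕ) % 2 = 0 := by
            show 2*(b:ℕ) % 2 = 0; omega
          rw [if_pos h0]
          congr 1
          apply Fin.ext
          show 2*(b:ℕ)/2 = (b:ℕ)
          omega
        rw [e1, e2]
        exact hab
      have h2 := Setoid.le_def.mp h h1
      exact (powSetoid_rel_iff σ (x := ⟨2*(a:ℕ), ha⟩) (y := ⟨2*(b:ℕ), hb⟩)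
        (by show 2*(a:ℕ)/2 = (a:ℕ); omega) (by show 2*(b:ℕ)/2 = (b:ℕ); omega)).mp h2
    · rw [Setoid.le_def]
      intro a b hab
      have ha : 2*(a:ℕ)+1 < 2*n := by have := a.isLt; omega
      have hb : 2*(b:ℕ)+1 < 2*n := by have := b.isLt; omega
      have h1 : shuffle2 ρ β ⟨2*(a:ℕ)+1, ha⟩ ⟨2*(b:ℕ)+1, hb⟩ := by
        show sumSetoid ρ β (decode2 n _) (decode2 n _)
        have e1 : decode2 n ⟨2*(a:ℕ)+1, ha⟩ = Sum.inr a := by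
          unfold decode2
          have h0 : ¬ ((⟨2*(a:ℕ)+1, ha⟩ : Fin (2*n)) : ℕ) % 2 = 0 := by
            show ¬ (2*(a:ℕ)+1) % 2 = 0; omega
          rw [if_neg h0]
          congr 1
          apply Fin.ext
          show (2*(a:ℕ)+1)/2 = (a:ℕ)
          omega
        have e2 : decode2 n ⟨2*(b:ℕ)+1, hb⟩ = Sum.inr b := by
          unfold decode2
          have h0 : ¬ ((⟨2*(b:ℕ)+1, hb⟩ : Fin (2*n)) : ℕ) % 2 = 0 := by
            show ¬ (2*(b:ℕ)+1) % 2 = 0; omega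
          rw [if_neg h0]
          congr 1
          apply Fin.ext
          show (2*(b:ℕ)+1)/2 = (b:ℕ)
          omega
        rw [e1, e2]
        exact hab
      have h2 := Setoid.le_def.mp h h1
      exact (powSetoid_rel_iff σ (x := ⟨2*(a:ℕ)+1, ha⟩) (y := ⟨2*(b:ℕ)+1, hb⟩)
        (by show (2*(a:ℕ)+1)/2 = (a:ℕ); omega) (by show (2*(b:ℕ)+1)/2 = (b:ℕ); omega)).mp h2
  · rintro ⟨h1, h2⟩
    rw [Setoid.le_def]
    intro x y hxy
    have hxy' : sumSetoid ρ β (decode2 n x) (decode2 n y) := hxy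
    show σ ⟨(x:ℕ)/2, Nat.div_lt_of_lt_mul x.isLt⟩ ⟨(y:ℕ)/2, Nat.div_lt_of_lt_mul y.isLt⟩
    by_cases hx : (x:ℕ) % 2 = 0 <;> by_cases hy : (y:ℕ) % 2 = 0 <;>
      simp only [decode2, hx, hy, if_true, if_false, reduceIte] at hxy'
    · exact Setoid.le_def.mp h1 hxy'
    · exact hxy'.elim
    · exact hxy'.elim
    · exact Setoid.le_def.mp h2 hxy'

theorem eqShuffle_le_pow_iff {n K : ℕ} (β : Fin K → Setoid (Fin n)) (σ : Setoid (Fin n)) :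
    eqShuffle n K β ≤ powSetoid K σ ↔ ∀ i, β i ≤ σ := by
  constructor
  · intro h i
    rw [Setoid.le_def]
    intro a b hab
    have hK : 0 < K := i.pos
    have hxa : (i:ℕ) + (a:ℕ)*K < K*n := by
      have h1 : (i:ℕ) + (a:ℕ)*K < K + (a:ℕ)*K := by have := i.isLt; omega
      have h2 : K + (a:ℕ)*K = ((a:ℕ)+1)*K := by ring
      have h3 : ((a:ℕ)+1)*K ≤ n*K := Nat.mul_le_mul_right K a.isLt
      calc (i:ℕ) + (a:ℕ)*K < ((a:ℕ)+1)*K := by omega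
        _ ≤ n*K := h3
        _ = K*n := Nat.mul_comm _ _
    have hxb : (i:ℕ) + (b:ℕ)*K < K*n := by
      have h1 : (i:ℕ) + (b:ℕ)*K < K + (b:ℕ)*K := by have := i.isLt; omega
      have h2 : K + (b:ℕ)*K = ((b:ℕ)+1)*K := by ring
      have h3 : ((b:ℕ)+1)*K ≤ n*K := Nat.mul_le_mul_right K b.isLt
      calc (i:ℕ) + (b:ℕ)*K < ((b:ℕ)+1)*K := by omega
        _ ≤ n*K := h3
        _ = K*n := Nat.mul_comm _ _
    have hmod : ∀ (c : ℕ), ((i:ℕ) + c*K) % K = (i:ℕ) := by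
      intro c
      rw [Nat.add_mul_mod_self_right]
      exact Nat.mod_eq_of_lt i.isLt
    have hdiv : ∀ (c : ℕ), ((i:ℕ) + c*K) / K = c := by
      intro c
      rw [Nat.add_mul_div_right _ _ hK, Nat.div_eq_of_lt i.isLt, Nat.zero_add]
    have he : eqShuffle n K β ⟨(i:ℕ) + (a:ℕ)*K, hxa⟩ ⟨(i:ℕ) + (b:ℕ)*K, hxb⟩ := by
      refine ⟨i, hmod _, hmod _, ?_⟩
      exact (rel_mk_iff (β i) (hdiv _) (hdiv _)).mpr hab
    have h2 := Setoid.le_def.mp h he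
    exact (powSetoid_rel_iff σ (x := ⟨(i:ℕ) + (a:ℕ)*K, hxa⟩) (y := ⟨(i:ℕ) + (b:ℕ)*K, hxb⟩)
      (hdiv _) (hdiv _)).mp h2
  · intro h
    rw [Setoid.le_def]
    intro x y hxy
    obtain ⟨i, _, _, h3⟩ := hxy
    show σ ⟨(x:ℕ)/K, _⟩ ⟨(y:ℕ)/K, _⟩
    exact Setoid.le_def.mp (h i) h3

/-- the set defining the `k`-fold join -/
def NJset {n k : ℕ} (α : Fin k → NCP n) : Set (Setoid (Fin n)) :=
  {σ | IsNoncrossing σ ∧ ∀ i, (α i).1 ≤ σ}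

/-- the `k`-fold join in the noncrossing-partition lattice -/
def NJ {n k : ℕ} (α : Fin k → NCP n) : NCP n :=
  ⟨sInf (NJset α), sInf_isNoncrossing' _ fun _ hγ => hγ.1⟩

theorem le_NJ {n k : ℕ} (α : Fin k → NCP n) (i : Fin k) : (α i).1 ≤ (NJ α).1 :=
  le_sInf fun _ hσ => hσ.2 i

theorem NJ_le {n k : ℕ} (α : Fin k → NCP n) {γ : NCP n} (h : ∀ i, (α i).1 ≤ γ.1) :
    (NJ α).1 ≤ γ.1 :=
  sInf_le ⟨γ.2, h⟩

theorem comp_eq_ncSup {n : ℕ} (α β : NCP n) :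
    comp α β = ⟨ncSup α.1 β.1, ncSup_isNoncrossing _ _⟩ := by
  unfold comp
  rw [ncSup_interval_eq_pow (by norm_num)]
  have hT : Troot 2 n (shuffle2 α.1 β.1) = ncSup α.1 β.1 := by
    unfold Troot TSet ncSup
    congr 1
    ext σ
    exact and_congr_right fun _ => shuffle2_le_pow_iff _ _ _
  rw [hT]
  exact nroot_pow (by norm_num) ⟨ncSup α.1 β.1, ncSup_isNoncrossing _ _⟩

theorem NJ_succ {n k : ℕ} (α : Fin (k+1) → NCP n) :
    NJ α = ⟨ncSup (NJ fun i : Fin k => α i.castSucc).1 (α (Fin.last k)).1,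
      ncSup_isNoncrossing _ _⟩ := by
  apply Subtype.ext
  apply le_antisymm
  · apply sInf_le
    refine ⟨ncSup_isNoncrossing _ _, ?_⟩
    intro i
    induction i using Fin.lastCases with
    | last => exact le_sInf fun γ hγ => hγ.2.2
    | cast j =>
      exact le_trans (le_NJ (fun i : Fin k => α i.castSucc) j) (le_sInf fun γ hγ => hγ.2.1)
  · apply sInf_le
    refine ⟨(NJ α).2, ?_, ?_⟩
    · exact NJ_le _ fun j => le_NJ α j.castSucc
    · exact le_NJ α (Fin.last k)

theorem ncSup_bot {n : ℕ} (μ : Setoid (Fin n)) (hμ : IsNoncrossing μ) :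
    ncSup (⊥ : Setoid (Fin n)) μ = μ := by
  apply le_antisymm
  · exact sInf_le ⟨hμ, bot_le, le_refl μ⟩
  · exact le_sInf fun γ hγ => hγ.2.2

theorem compTuple_eq_NJ {n : ℕ} : ∀ (k : ℕ) (α : Fin (k+1) → NCP n), compTuple α = NJ α := by
  intro k
  induction k with
  | zero =>
    intro α
    show comp (⊥ : NCP n) (α (Fin.last 0)) = NJ α
    rw [comp_eq_ncSup]
    apply Subtype.ext
    show ncSup (⊥ : NCP n).1 (α (Fin.last 0)).1 = (NJ α).1
    have hb : ((⊥ : NCP n)).1 = (⊥ : Setoid (Fin n)) := rfl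
    rw [hb, ncSup_bot _ (α (Fin.last 0)).2]
    apply le_antisymm
    · exact le_NJ α (Fin.last 0)
    · apply NJ_le
      intro i
      have hi : (i:ℕ) = 0 := by have := i.isLt; omega
      have : i = Fin.last 0 := by
        apply Fin.ext
        rw [hi]
        rfl
      rw [this]
  | succ k ih =>
    intro α
    show comp (compTuple fun i : Fin (k+1) => α i.castSucc) (α (Fin.last (k+1))) = NJ α
    rw [ih, comp_eq_ncSup, ← NJ_succ]


/-- **Statement 10.** For an `n`-admissible `k`-tuple `(α_1,…,α_k)` in `NCP(n)`,
`α_1 ∘ ⋯ ∘ α_k = ((α_1 ∗_n ⋯ ∗_n α_k) ∨ {{1,…,k},…,{kn−k+1,…,kn}})^{1/k}`. -/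
theorem compTuple_eq_root_of_shuffle (n K : ℕ) (hK : 0 < K) (α : Fin K → NCP n)
    (h : AdmissibleTuple n K α) :
    compTuple α =
      nroot K n (ncSup (eqShuffle n K fun i => (α i).1) (intervalSetoid K n)) := by
  obtain ⟨k, rfl⟩ : ∃ k, K = k + 1 := ⟨K - 1, by omega⟩
  rw [compTuple_eq_NJ]
  rw [ncSup_interval_eq_pow (by omega)]
  have hT : Troot (k+1) n (eqShuffle n (k+1) fun i => (α i).1) = (NJ α).1 := by
    show sInf _ = sInf _
    congr 1
    ext σ
    exact and_congr_right fun _ => eqShuffle_le_pow_iff _ _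
  rw [hT]
  exact (nroot_pow (by omega) (NJ α)).symm
end

section
/- For every α ∈ NCP(n), the intervals [0_n, α] and [K(α), 1_n] in the lattice (NCP(n), |) are anti-isomorphic as lattices. -/
open scoped BigOperators

section Krew
variable {n : ℕ}

/-- Explicit Kreweras complement relation: `j ~ k` iff no `α`-pair crosses `(j,k]`. -/
def krel (α : Setoid (Fin n)) : Setoid (Fin n) where
  r j k := ∀ a b : Fin n, α a b →
    (((a:ℕ) ≤ (j:ℕ) ↔ (a:ℕ) ≤ (k:ℕ)) ↔ ((b:ℕ) ≤ (j:ℕ) ↔ (b:ℕ) ≤ (k:ℕ)))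
  iseqv := by
    constructor
    · intro j a b _; tauto
    · intro j k h a b hab; have := h a b hab; tauto
    · intro j k l h1 h2 a b hab; have := h1 a b hab; have := h2 a b hab; tauto

/-- Mirror Kreweras complement relation: `j ~ k` iff no `α`-pair crosses `[j,k)`. -/
def krel' (α : Setoid (Fin n)) : Setoid (Fin n) where
  r j k := ∀ a b : Fin n, α a b →
    (((j:ℕ) ≤ (a:ℕ) ↔ (k:ℕ) ≤ (a:ℕ)) ↔ ((j:ℕ) ≤ (b:ℕ) ↔ (k:ℕ) ≤ (b:ℕ)))
  iseqv := by
    constructor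
    · intro j a b _; tauto
    · intro j k h a b hab; have := h a b hab; tauto
    · intro j k l h1 h2 a b hab; have := h1 a b hab; have := h2 a b hab; tauto

theorem krel_def {α : Setoid (Fin n)} {j k : Fin n} : krel α j k ↔
    ∀ a b : Fin n, α a b →
      (((a:ℕ) ≤ (j:ℕ) ↔ (a:ℕ) ≤ (k:ℕ)) ↔ ((b:ℕ) ≤ (j:ℕ) ↔ (b:ℕ) ≤ (k:ℕ))) := Iff.rfl

theorem krel'_def {α : Setoid (Fin n)} {j k : Fin n} : krel' α j k ↔
    ∀ a b : Fin n, α a b →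
      (((j:ℕ) ≤ (a:ℕ) ↔ (k:ℕ) ≤ (a:ℕ)) ↔ (((j:ℕ) ≤ (b:ℕ)) ↔ (k:ℕ) ≤ (b:ℕ))) := Iff.rfl

theorem krel_isNoncrossing (α : Setoid (Fin n)) : IsNoncrossing (krel α) := by
  intro p q r s hpq hqr hrs hpr hqs a b hab
  have h1 := hpr a b hab
  have h2 := hqs a b hab
  have hpq' : (p:ℕ) < q := hpq
  have hqr' : (q:ℕ) < r := hqr
  have hrs' : (r:ℕ) < s := hrs
  omega

theorem krel'_isNoncrossing (α : Setoid (Fin n)) : IsNoncrossing (krel' α) := by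
  intro p q r s hpq hqr hrs hpr hqs a b hab
  have h1 := hpr a b hab
  have h2 := hqs a b hab
  have hpq' : (p:ℕ) < q := hpq
  have hqr' : (q:ℕ) < r := hqr
  have hrs' : (r:ℕ) < s := hrs
  omega

theorem krel_anti {α β : Setoid (Fin n)} (h : α ≤ β) : krel β ≤ krel α :=
  Setoid.le_def.mpr fun hjk a b hab => hjk a b (Setoid.le_def.mp h hab)

theorem krel'_anti {α β : Setoid (Fin n)} (h : α ≤ β) : krel' β ≤ krel' α :=
  Setoid.le_def.mpr fun hjk a b hab => hjk a b (Setoid.le_def.mp h hab)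

/-- Crossing symmetry: `γ` avoids crossing `α` iff `α` avoids crossing `γ`. -/
theorem le_krel_iff {α γ : Setoid (Fin n)} : γ ≤ krel α ↔ α ≤ krel' γ := by
  constructor
  · intro h
    rw [Setoid.le_def] at h ⊢
    intro a b hab j k hjk
    have := h hjk a b hab
    tauto
  · intro h
    rw [Setoid.le_def] at h ⊢
    intro j k hjk a b hab
    have := h hab j k hjk
    tauto

theorem eq_bot_of_krel_eq_top {α : Setoid (Fin n)} (h : krel α = ⊤) : α = ⊥ := by
  apply Setoid.ext
  intro a b
  rw [show ((⊥ : Setoid (Fin n)) : Fin n → Fin n → Prop) = (· = ·) from Setoid.bot_def]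
  constructor
  · intro hab
    by_contra hne
    have htop : krel α a b := by
      rw [h]
      rw [show ((⊤ : Setoid (Fin n)) : Fin n → Fin n → Prop) = ⊤ from Setoid.top_def]
      trivial
    have := htop a b hab
    have : (a:ℕ) ≠ (b:ℕ) := fun hv => hne (Fin.ext hv)
    omega
  · intro hab; exact hab ▸ α.refl' a

end Krew
section Krew2
variable {n : ℕ}

theorem nc_right {π : Setoid (Fin n)} (hπ : IsNoncrossing π) {a b c d : Fin n}
    (hab : a < b) (hbc : b < c) (hcd : c < d) (hac : π a c) (hbd : π b d) : π c d := by
  have h1 : π a b := hπ a b c d hab hbc hcd hac hbd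
  have h2 : π b c := π.trans' (π.symm' h1) hac
  exact π.trans' (π.symm' h2) hbd

/-- Reversal of a partition. -/
def revS (α : Setoid (Fin n)) : Setoid (Fin n) := Setoid.comap Fin.rev α

theorem revS_rel {α : Setoid (Fin n)} {a b : Fin n} : revS α a b ↔ α a.rev b.rev := Iff.rfl

theorem revS_revS (α : Setoid (Fin n)) : revS (revS α) = α :=
  Setoid.ext fun a b => by
    show α a.rev.rev b.rev.rev ↔ α a b
    rw [Fin.rev_rev, Fin.rev_rev]

theorem revS_isNoncrossing {α : Setoid (Fin n)} (hα : IsNoncrossing α) :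
    IsNoncrossing (revS α) := by
  intro a b c d hab hbc hcd hac hbd
  show α a.rev b.rev
  have h1 : d.rev < c.rev := Fin.rev_lt_rev.mpr hcd
  have h2 : c.rev < b.rev := Fin.rev_lt_rev.mpr hbc
  have h3 : b.rev < a.rev := Fin.rev_lt_rev.mpr hab
  exact α.symm' (nc_right hα h1 h2 h3 (α.symm' hbd) (α.symm' hac))

theorem krel_revS (α : Setoid (Fin n)) : krel (revS α) = revS (krel' α) := by
  apply Setoid.ext
  intro j k
  constructor
  · intro h a b hab
    have := h a.rev b.rev (by show α a.rev.rev b.rev.rev; rwa [Fin.rev_rev, Fin.rev_rev])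
    have hva : (Fin.rev a : ℕ) = n - (a+1) := Fin.val_rev a
    have hvb : (Fin.rev b : ℕ) = n - (b+1) := Fin.val_rev b
    have hvj : (Fin.rev j : ℕ) = n - (j+1) := Fin.val_rev j
    have hvk : (Fin.rev k : ℕ) = n - (k+1) := Fin.val_rev k
    have := a.isLt; have := b.isLt; have := j.isLt; have := k.isLt
    omega
  · intro h a b hab
    have := h a.rev b.rev hab
    have hva : (Fin.rev a : ℕ) = n - (a+1) := Fin.val_rev a
    have hvb : (Fin.rev b : ℕ) = n - (b+1) := Fin.val_rev b
    have hvj : (Fin.rev j : ℕ) = n - (j+1) := Fin.val_rev j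
    have hvk : (Fin.rev k : ℕ) = n - (k+1) := Fin.val_rev k
    have := a.isLt; have := b.isLt; have := j.isLt; have := k.isLt
    omega

theorem krel'_revS (α : Setoid (Fin n)) : krel' (revS α) = revS (krel α) := by
  have h := krel_revS (revS α)
  rw [revS_revS] at h
  have := congrArg revS h
  rw [revS_revS] at this
  exact this.symm
end Krew2
section Krew3
variable {n : ℕ}

theorem nc_mid {π : Setoid (Fin n)} (hπ : IsNoncrossing π) {a b c d : Fin n}
    (hab : (a:ℕ) < b) (hbc : (b:ℕ) < c) (hcd : (c:ℕ) < d) (hac : π a c) (hbd : π b d) :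
    π a b := hπ a b c d hab hbc hcd hac hbd

theorem krel'_krel {α : Setoid (Fin n)} (hα : IsNoncrossing α) : krel' (krel α) = α := by
  apply le_antisymm
  · rw [Setoid.le_def]
    suffices H : ∀ x y : Fin n, (x:ℕ) < (y:ℕ) → krel' (krel α) x y → α x y by
      intro x y h
      rcases lt_trichotomy (x:ℕ) (y:ℕ) with hlt | heq | hgt
      · exact H x y hlt h
      · exact Fin.ext heq ▸ α.refl' x
      · exact α.symm' (H y x hgt ((krel' (krel α)).symm' h))
    intro x y hxy h
    by_contra hnxy
    classical
    have hBne : (Finset.univ.filter (fun c : Fin n => α y c)).Nonempty :=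
      ⟨y, Finset.mem_filter.mpr ⟨Finset.mem_univ y, α.refl' y⟩⟩
    set m := (Finset.univ.filter (fun c : Fin n => α y c)).min' hBne with hm
    have hym : α y m := (Finset.mem_filter.mp (Finset.min'_mem _ hBne)).2
    have hmmin : ∀ c : Fin n, α y c → (m:ℕ) ≤ (c:ℕ) := fun c hc =>
      Finset.min'_le _ c (Finset.mem_filter.mpr ⟨Finset.mem_univ c, hc⟩)
    by_cases hmx : (m:ℕ) ≤ (x:ℕ)
    · -- the class of y has an element < x
      have hmltx : (m:ℕ) < (x:ℕ) := by
        rcases eq_or_lt_of_le hmx with he | hl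
        · exact absurd (α.symm' (by rwa [show m = x from Fin.ext he] at hym)) hnxy
        · exact hl
      have hb1ne : (Finset.univ.filter (fun c : Fin n => α y c ∧ (c:ℕ) < (x:ℕ))).Nonempty :=
        ⟨m, Finset.mem_filter.mpr ⟨Finset.mem_univ m, hym, hmltx⟩⟩
      have hb2ne : (Finset.univ.filter (fun c : Fin n => α y c ∧ (x:ℕ) < (c:ℕ))).Nonempty :=
        ⟨y, Finset.mem_filter.mpr ⟨Finset.mem_univ y, α.refl' y, hxy⟩⟩
      set b1 := (Finset.univ.filter (fun c : Fin n => α y c ∧ (c:ℕ) < (x:ℕ))).max' hb1ne with hb1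
      set b2 := (Finset.univ.filter (fun c : Fin n => α y c ∧ (x:ℕ) < (c:ℕ))).min' hb2ne with hb2
      have hb1mem : α y b1 ∧ (b1:ℕ) < (x:ℕ) :=
        (Finset.mem_filter.mp (Finset.max'_mem _ hb1ne)).2
      have hb2mem : α y b2 ∧ (x:ℕ) < (b2:ℕ) :=
        (Finset.mem_filter.mp (Finset.min'_mem _ hb2ne)).2
      have hb1max : ∀ c : Fin n, α y c → (c:ℕ) < (x:ℕ) → (c:ℕ) ≤ (b1:ℕ) := fun c hc hcx =>
        Finset.le_max' _ c (Finset.mem_filter.mpr ⟨Finset.mem_univ c, hc, hcx⟩)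
      have hb2min : ∀ c : Fin n, α y c → (x:ℕ) < (c:ℕ) → (b2:ℕ) ≤ (c:ℕ) := fun c hc hcx =>
        Finset.min'_le _ c (Finset.mem_filter.mpr ⟨Finset.mem_univ c, hc, hcx⟩)
      have hb2y : (b2:ℕ) ≤ (y:ℕ) := hb2min y (α.refl' y) hxy
      have hb12 : α b1 b2 := α.trans' (α.symm' hb1mem.1) hb2mem.1
      have hgap : ∀ c : Fin n, α y c → ¬((b1:ℕ) < (c:ℕ) ∧ (c:ℕ) < (b2:ℕ)) := by
        intro c hc hcc
        rcases lt_trichotomy (c:ℕ) (x:ℕ) with hlt | heq | hgt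
        · have := hb1max c hc hlt; omega
        · exact hnxy (α.symm' (by rwa [show c = x from Fin.ext heq] at hc))
        · have := hb2min c hc hgt; omega
      have hq : (b2:ℕ) - 1 < n := by have := b2.isLt; omega
      set q : Fin n := ⟨(b2:ℕ) - 1, hq⟩ with hqdef
      have hqv : (q:ℕ) = (b2:ℕ) - 1 := rfl
      have sat : ∀ a b : Fin n, α a b → (b1:ℕ) < (a:ℕ) → (a:ℕ) ≤ (q:ℕ) →
          ((b1:ℕ) < (b:ℕ) ∧ (b:ℕ) ≤ (q:ℕ)) := by
        intro a b hab ha1 ha2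
        have hab2 : (a:ℕ) < (b2:ℕ) := by omega
        have hya : ¬ α y a := fun hcon => hgap a hcon ⟨ha1, hab2⟩
        by_contra hcon
        have hcases : (b:ℕ) ≤ (b1:ℕ) ∨ (b2:ℕ) ≤ (b:ℕ) := by omega
        rcases hcases with hc | hc
        · rcases eq_or_lt_of_le hc with he | hl
          · have hyb : α y b := by rw [show b = b1 from Fin.ext he]; exact hb1mem.1
            exact hya (α.trans' hyb (α.symm' hab))
          · have hbb1 : α b b1 := nc_mid hα hl ha1 hab2 (α.symm' hab) hb12
            have hyb : α y b := α.trans' hb1mem.1 (α.symm' hbb1)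
            exact hya (α.trans' hyb (α.symm' hab))
        · rcases eq_or_lt_of_le hc with he | hl
          · have hyb : α y b := by rw [show b = b2 from Fin.ext he.symm]; exact hb2mem.1
            exact hya (α.trans' hyb (α.symm' hab))
          · have hb1a : α b1 a := nc_mid hα ha1 hab2 hl hb12 hab
            exact hya (α.trans' hb1mem.1 hb1a)
      have hkrel : krel α b1 q := by
        intro a b hab
        have h1 := sat a b hab
        have h2 := sat b a (α.symm' hab)
        omega
      have hfin := h b1 q hkrel
      have hb1x := hb1mem.2
      have hxb2 := hb2mem.2
      omega
    · -- the whole class of y lies strictly above x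
      push_neg at hmx
      set M := (Finset.univ.filter (fun c : Fin n => α y c)).max' hBne with hM
      have hyM : α y M := (Finset.mem_filter.mp (Finset.max'_mem _ hBne)).2
      have hMmax : ∀ c : Fin n, α y c → (c:ℕ) ≤ (M:ℕ) := fun c hc =>
        Finset.le_max' _ c (Finset.mem_filter.mpr ⟨Finset.mem_univ c, hc⟩)
      have hmy : (m:ℕ) ≤ (y:ℕ) := hmmin y (α.refl' y)
      have hyMv : (y:ℕ) ≤ (M:ℕ) := hMmax y (α.refl' y)
      have hj0 : (m:ℕ) - 1 < n := by have := m.isLt; omega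
      set j0 : Fin n := ⟨(m:ℕ) - 1, hj0⟩ with hj0def
      have hj0v : (j0:ℕ) = (m:ℕ) - 1 := rfl
      have sat : ∀ a b : Fin n, α a b → (j0:ℕ) < (a:ℕ) → (a:ℕ) ≤ (M:ℕ) →
          ((j0:ℕ) < (b:ℕ) ∧ (b:ℕ) ≤ (M:ℕ)) := by
        intro a b hab ha1 ha2
        by_cases hya : α y a
        · have hyb : α y b := α.trans' hya hab
          have h1 := hmmin b hyb
          have h2 := hMmax b hyb
          omega
        · have hma : (m:ℕ) < (a:ℕ) := by
            rcases eq_or_lt_of_le (show (m:ℕ) ≤ (a:ℕ) by omega) with he | hl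
            · exact absurd ((show m = a from Fin.ext he) ▸ hym) hya
            · exact hl
          have haM : (a:ℕ) < (M:ℕ) := by
            rcases eq_or_lt_of_le ha2 with he | hl
            · exact absurd ((show M = a from Fin.ext he.symm) ▸ hyM) hya
            · exact hl
          have hb1ne' : (Finset.univ.filter
              (fun c : Fin n => α y c ∧ (c:ℕ) < (a:ℕ))).Nonempty :=
            ⟨m, Finset.mem_filter.mpr ⟨Finset.mem_univ m, hym, hma⟩⟩
          have hb2ne' : (Finset.univ.filter
              (fun c : Fin n => α y c ∧ (a:ℕ) < (c:ℕ))).Nonempty :=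
            ⟨M, Finset.mem_filter.mpr ⟨Finset.mem_univ M, hyM, haM⟩⟩
          set c1 := (Finset.univ.filter (fun c : Fin n => α y c ∧ (c:ℕ) < (a:ℕ))).max' hb1ne'
            with hc1d
          set c2 := (Finset.univ.filter (fun c : Fin n => α y c ∧ (a:ℕ) < (c:ℕ))).min' hb2ne'
            with hc2d
          have hc1mem : α y c1 ∧ (c1:ℕ) < (a:ℕ) :=
            (Finset.mem_filter.mp (Finset.max'_mem _ hb1ne')).2
          have hc2mem : α y c2 ∧ (a:ℕ) < (c2:ℕ) :=
            (Finset.mem_filter.mp (Finset.min'_mem _ hb2ne')).2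
          have hc12 : α c1 c2 := α.trans' (α.symm' hc1mem.1) hc2mem.1
          have hmc1 : (m:ℕ) ≤ (c1:ℕ) := hmmin c1 hc1mem.1
          have hc2M : (c2:ℕ) ≤ (M:ℕ) := hMmax c2 hc2mem.1
          by_contra hcon
          have hcases : (b:ℕ) < (m:ℕ) ∨ (M:ℕ) < (b:ℕ) := by omega
          rcases hcases with hc | hc
          · have hbc1 : α b c1 := nc_mid hα (by omega) hc1mem.2 hc2mem.2 (α.symm' hab) hc12
            have hyb : α y b := α.trans' hc1mem.1 (α.symm' hbc1)
            have := hmmin b hyb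
            omega
          · have hc1a : α c1 a := nc_mid hα hc1mem.2 hc2mem.2 (by omega) hc12 hab
            exact hya (α.trans' hc1mem.1 hc1a)
      have hkrel : krel α j0 M := by
        intro a b hab
        have h1 := sat a b hab
        have h2 := sat b a (α.symm' hab)
        omega
      have hfin := h j0 M hkrel
      omega
  · exact le_krel_iff.mp (le_refl (krel α))

theorem krel_krel' {α : Setoid (Fin n)} (hα : IsNoncrossing α) : krel (krel' α) = α := by
  have h1 : krel' α = revS (krel (revS α)) := by
    have h := krel'_revS (revS α)
    rwa [revS_revS] at h
  rw [h1, krel_revS, krel'_krel (revS_isNoncrossing hα), revS_revS]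
end Krew3
section Krew4
variable {n : ℕ}

theorem joinG {α τ : Setoid (Fin n)} (hα : IsNoncrossing α)
    (hτα : α ≤ τ) (hτk : krel α ≤ τ) :
    ∀ d : ℕ, ∀ j k : Fin n, (k:ℕ) - (j:ℕ) ≤ d → (j:ℕ) ≤ (k:ℕ) →
      (∀ a b : Fin n, α a b → (j:ℕ) ≤ (a:ℕ) → (a:ℕ) ≤ (k:ℕ) → ¬ α j a →
        ((j:ℕ) ≤ (b:ℕ) ∧ (b:ℕ) ≤ (k:ℕ))) →
      ∀ x : Fin n, (j:ℕ) ≤ (x:ℕ) → (x:ℕ) ≤ (k:ℕ) → τ j x := by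
  have hτα' : ∀ {x y : Fin n}, α x y → τ x y := fun h => Setoid.le_def.mp hτα h
  have hτk' : ∀ {x y : Fin n}, krel α x y → τ x y := fun h => Setoid.le_def.mp hτk h
  intro d
  induction d with
  | zero =>
    intro j k hd hjk H x h1 h2
    have : x = j := Fin.ext (by omega)
    rw [this]
  | succ d IH =>
    intro j k hd hjk H x h1 h2
    by_cases hjx : α j x
    · exact hτα' hjx
    have hjxlt : (j:ℕ) < (x:ℕ) := by
      rcases eq_or_lt_of_le h1 with he | hl
      · exact absurd ((Fin.ext he : j = x) ▸ α.refl' j) hjx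
      · exact hl
    classical
    by_cases hS : (Finset.univ.filter
        (fun c : Fin n => (j:ℕ) < (c:ℕ) ∧ (c:ℕ) ≤ (k:ℕ) ∧ α j c)).Nonempty
    · set p := (Finset.univ.filter
        (fun c : Fin n => (j:ℕ) < (c:ℕ) ∧ (c:ℕ) ≤ (k:ℕ) ∧ α j c)).min' hS with hp
      have hpmem : (j:ℕ) < (p:ℕ) ∧ (p:ℕ) ≤ (k:ℕ) ∧ α j p :=
        (Finset.mem_filter.mp (Finset.min'_mem _ hS)).2
      have hpmin : ∀ c : Fin n, (j:ℕ) < (c:ℕ) → (c:ℕ) ≤ (k:ℕ) → α j c → (p:ℕ) ≤ (c:ℕ) :=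
        fun c h1 h2 h3 => Finset.min'_le _ c (Finset.mem_filter.mpr ⟨Finset.mem_univ c, h1, h2, h3⟩)
      rcases lt_trichotomy (x:ℕ) (p:ℕ) with hxp | hxp | hxp
      · set q : Fin n := ⟨(p:ℕ) - 1, by have := p.isLt; omega⟩ with hqd
        have hqv : (q:ℕ) = (p:ℕ) - 1 := rfl
        have sat : ∀ a b : Fin n, α a b → (j:ℕ) < (a:ℕ) → (a:ℕ) ≤ (q:ℕ) →
            ((j:ℕ) < (b:ℕ) ∧ (b:ℕ) ≤ (q:ℕ)) := by
          intro a b hab ha1 ha2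
          have hja : ¬ α j a := fun hcon =>
            absurd (hpmin a ha1 (by omega) hcon) (by omega)
          have hbk := H a b hab (by omega) (by omega) hja
          have hbj : (j:ℕ) < (b:ℕ) := by
            rcases eq_or_lt_of_le hbk.1 with he | hl
            · exact absurd (α.symm' ((Fin.ext he : j = b) ▸ hab : α a j)) hja
            · exact hl
          refine ⟨hbj, ?_⟩
          by_contra hcon2
          have hbp : (p:ℕ) ≤ (b:ℕ) := by omega
          rcases eq_or_lt_of_le hbp with he | hl
          · exact hja (α.trans' hpmem.2.2 (α.symm' ((Fin.ext he : p = b) ▸ hab : α a p)))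
          · exact hja (nc_mid hα ha1 (by omega) hl hpmem.2.2 hab)
        have hkrel : krel α j q := by
          intro a b hab
          have h1' := sat a b hab
          have h2' := sat b a (α.symm' hab)
          omega
        set j1 : Fin n := ⟨(j:ℕ) + 1, by have := x.isLt; omega⟩ with hj1d
        have hj1v : (j1:ℕ) = (j:ℕ) + 1 := rfl
        have IH1 := IH j1 q (by omega) (by omega)
          (fun a b hab ha1 ha2 _ => by
            have := sat a b hab (by omega) ha2
            omega)
        have hx1 := IH1 x (by omega) (by omega)
        have hq1 := IH1 q (by omega) (by omega)
        exact τ.trans' (τ.trans' (hτk' hkrel) (τ.symm' hq1)) hx1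
      · exact absurd (by rw [show x = p from Fin.ext hxp]; exact hpmem.2.2) hjx
      · have H2 : ∀ a b : Fin n, α a b → (p:ℕ) ≤ (a:ℕ) → (a:ℕ) ≤ (k:ℕ) → ¬ α p a →
            ((p:ℕ) ≤ (b:ℕ) ∧ (b:ℕ) ≤ (k:ℕ)) := by
          intro a b hab ha1 ha2 hpa
          have hja : ¬ α j a := fun hcon => hpa (α.trans' (α.symm' hpmem.2.2) hcon)
          have hbk := H a b hab (by omega) ha2 hja
          refine ⟨?_, hbk.2⟩
          by_contra hcon2
          have hbp : (b:ℕ) < (p:ℕ) := by omega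
          have hap : (p:ℕ) < (a:ℕ) := by
            rcases eq_or_lt_of_le ha1 with he | hl
            · exact absurd ((Fin.ext he : p = a) ▸ α.refl' p) hpa
            · exact hl
          have hbj : (j:ℕ) < (b:ℕ) := by
            rcases eq_or_lt_of_le hbk.1 with he | hl
            · exact absurd (α.symm' ((Fin.ext he : j = b) ▸ hab : α a j)) hja
            · exact hl
          have hjb : α j b := nc_mid hα hbj hbp hap hpmem.2.2 (α.symm' hab)
          exact absurd (hpmin b hbj (by omega) hjb) (by omega)
        have IH2 := IH p k (by omega) (by omega) H2 x (by omega) h2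
        exact τ.trans' (hτα' hpmem.2.2) IH2
    · have sat : ∀ a b : Fin n, α a b → (j:ℕ) < (a:ℕ) → (a:ℕ) ≤ (k:ℕ) →
          ((j:ℕ) < (b:ℕ) ∧ (b:ℕ) ≤ (k:ℕ)) := by
        intro a b hab ha1 ha2
        have hja : ¬ α j a := fun hcon =>
          hS ⟨a, Finset.mem_filter.mpr ⟨Finset.mem_univ a, ha1, ha2, hcon⟩⟩
        have hbk := H a b hab (by omega) ha2 hja
        have hbj : (j:ℕ) < (b:ℕ) := by
          rcases eq_or_lt_of_le hbk.1 with he | hl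
          · exact absurd (α.symm' ((Fin.ext he : j = b) ▸ hab : α a j)) hja
          · exact hl
        exact ⟨hbj, hbk.2⟩
      have hkrel : krel α j k := by
        intro a b hab
        have h1' := sat a b hab
        have h2' := sat b a (α.symm' hab)
        omega
      set j1 : Fin n := ⟨(j:ℕ) + 1, by have := x.isLt; omega⟩ with hj1d
      have hj1v : (j1:ℕ) = (j:ℕ) + 1 := rfl
      have IH1 := IH j1 k (by omega) (by omega)
        (fun a b hab ha1 ha2 _ => by
          have := sat a b hab (by omega) ha2
          omega)
      have hx1 := IH1 x (by omega) (by omega)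
      have hk1 := IH1 k (by omega) (by omega)
      exact τ.trans' (τ.trans' (hτk' hkrel) (τ.symm' hk1)) hx1

/-- Any partition coarser than both `α` and `krel α` is the full partition. -/
theorem krel_joinTop {α τ : Setoid (Fin n)} (hα : IsNoncrossing α)
    (hτα : α ≤ τ) (hτk : krel α ≤ τ) : τ = ⊤ := by
  apply Setoid.ext
  intro a b
  rw [show ((⊤ : Setoid (Fin n)) : Fin n → Fin n → Prop) = ⊤ from Setoid.top_def]
  refine ⟨fun _ => trivial, fun _ => ?_⟩
  have h0 : 0 < n := lt_of_le_of_lt (Nat.zero_le _) a.isLt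
  set z : Fin n := ⟨0, h0⟩ with hz
  set w : Fin n := ⟨n - 1, by omega⟩ with hw
  have hzv : (z:ℕ) = 0 := rfl
  have hwv : (w:ℕ) = n - 1 := rfl
  have key : ∀ x : Fin n, τ z x := by
    intro x
    refine joinG hα hτα hτk n z w (by omega) (by omega)
      (fun a' b' _ _ _ _ => ⟨by omega, by have := b'.isLt; omega⟩) x (by omega) ?_
    have := x.isLt; omega
  exact τ.trans' (τ.symm' (key a)) (key b)

end Krew4
section Krew5
variable {n : ℕ}

theorem acast {α : Setoid (Fin n)} {a b c : Fin n} (h : (a:ℕ) = (b:ℕ)) (hr : α a c) :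
    α b c := by rwa [show a = b from Fin.ext h] at hr

/-- Unique complement: if `δ` coarsens `α` and no nontrivial pair lies in both `δ`
and `krel' α`, then `δ ≤ α`. -/
theorem uniq_above {α δ : Setoid (Fin n)} (hα : IsNoncrossing α) (hδ : IsNoncrossing δ)
    (hαδ : α ≤ δ) (hmeet : ∀ j k : Fin n, δ j k → krel' α j k → j = k) : δ ≤ α := by
  classical
  have hαδ' : ∀ {u v : Fin n}, α u v → δ u v := fun h => Setoid.le_def.mp hαδ h
  by_contra hcon
  obtain ⟨x0, y0, hδ0, hnα0⟩ : ∃ x y : Fin n, δ x y ∧ ¬ α x y := by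
    by_contra hall
    push_neg at hall
    exact hcon (Setoid.le_def.mpr fun {u v} h => hall u v h)
  set T := Finset.univ.filter
    (fun p : Fin n × Fin n => δ p.1 p.2 ∧ ¬ α p.1 p.2 ∧ (p.1:ℕ) < (p.2:ℕ)) with hT
  have hTne : T.Nonempty := by
    rcases lt_trichotomy (x0:ℕ) (y0:ℕ) with h | h | h
    · exact ⟨⟨x0, y0⟩, Finset.mem_filter.mpr ⟨Finset.mem_univ _, hδ0, hnα0, h⟩⟩
    · exact absurd (acast rfl ((show x0 = y0 from Fin.ext h) ▸ α.refl' x0)) hnα0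
    · exact ⟨⟨y0, x0⟩, Finset.mem_filter.mpr ⟨Finset.mem_univ _, δ.symm' hδ0,
        fun hc => hnα0 (α.symm' hc), h⟩⟩
  obtain ⟨⟨x, y⟩, hmem, hminf⟩ := Finset.exists_min_image T
    (fun p => (p.2.1:ℕ) - (p.1.1:ℕ)) hTne
  obtain ⟨-, hδxy, hnxy, hxy⟩ := Finset.mem_filter.mp hmem
  dsimp only at hδxy hnxy hxy
  have hmin' : ∀ u v : Fin n, δ u v → (u:ℕ) < (v:ℕ) → (v:ℕ) - (u:ℕ) < (y:ℕ) - (x:ℕ) →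
      α u v := by
    intro u v h1 h2 h3
    by_contra h4
    have := hminf ⟨u, v⟩ (Finset.mem_filter.mpr ⟨Finset.mem_univ _, h1, h4, h2⟩)
    simp only at this
    omega
  have shapeInt : ∀ u v : Fin n, α u v → (x:ℕ) < (u:ℕ) → (u:ℕ) < (y:ℕ) →
      ((x:ℕ) < (v:ℕ) ∧ (v:ℕ) < (y:ℕ)) := by
    intro u v huv h1 h2
    by_contra hcon2
    have hδxu : δ x u := by
      rcases lt_trichotomy (v:ℕ) (x:ℕ) with hv | hv | hv
      · have h5 : δ v x := nc_mid hδ hv h1 h2 (hαδ' (α.symm' huv)) hδxy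
        exact δ.trans' (δ.symm' h5) (hαδ' (α.symm' huv))
      · exact hαδ' (acast hv (α.symm' huv))
      · rcases lt_trichotomy (v:ℕ) (y:ℕ) with hv2 | hv2 | hv2
        · exact absurd ⟨hv, hv2⟩ hcon2
        · exact δ.trans' hδxy (δ.symm' (hαδ' (α.symm' (acast hv2 (α.symm' huv)))))
        · exact nc_mid hδ h1 h2 hv2 hδxy (hαδ' huv)
    by_cases huy : α u y
    · have hnxu : ¬ α x u := fun hc => hnxy (α.trans' hc huy)
      exact hnxu (hmin' x u hδxu (by omega) (by omega))
    · have hδuy : δ u y := δ.trans' (δ.symm' hδxu) hδxy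
      exact huy (hmin' u y hδuy (by omega) (by omega))
  obtain ⟨e, hxe, he⟩ : ∃ e : Fin n, α x e ∧ ((y:ℕ) < (e:ℕ) ∨ (e:ℕ) < (x:ℕ)) := by
    have hnk : ¬ krel' α x y := fun hk =>
      absurd (hmeet x y hδxy hk) (Fin.ne_of_val_ne (by omega))
    rw [krel'_def] at hnk
    push_neg at hnk
    obtain ⟨a, b, hab, hniff⟩ := hnk
    have hcases : ((x:ℕ) ≤ (a:ℕ) ∧ (a:ℕ) < (y:ℕ) ∧ ¬((x:ℕ) ≤ (b:ℕ) ∧ (b:ℕ) < (y:ℕ))) ∨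
        ((x:ℕ) ≤ (b:ℕ) ∧ (b:ℕ) < (y:ℕ) ∧ ¬((x:ℕ) ≤ (a:ℕ) ∧ (a:ℕ) < (y:ℕ))) := by omega
    rcases hcases with ⟨ha1, ha2, hb⟩ | ⟨hb1, hb2, ha⟩
    · rcases eq_or_lt_of_le ha1 with heq | hl
      · refine ⟨b, acast heq.symm hab, ?_⟩
        have hby : (b:ℕ) ≠ (y:ℕ) := fun hc =>
          hnxy (α.symm' (acast hc (α.symm' (acast heq.symm hab))))
        omega
      · have := shapeInt a b hab hl ha2
        omega
    · rcases eq_or_lt_of_le hb1 with heq | hl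
      · refine ⟨a, acast heq.symm (α.symm' hab), ?_⟩
        have hay : (a:ℕ) ≠ (y:ℕ) := fun hc =>
          hnxy (α.symm' (acast hc (α.symm' (acast heq.symm (α.symm' hab)))))
        omega
      · have := shapeInt b a (α.symm' hab) hl hb2
        omega
  by_cases hright : (Finset.univ.filter
      (fun c : Fin n => α x c ∧ (y:ℕ) < (c:ℕ))).Nonempty
  · -- the class of x has an element beyond y
    set b' := (Finset.univ.filter (fun c : Fin n => α x c ∧ (y:ℕ) < (c:ℕ))).min' hright
      with hb'
    have hb'mem : α x b' ∧ (y:ℕ) < (b':ℕ) :=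
      (Finset.mem_filter.mp (Finset.min'_mem _ hright)).2
    have hb'min : ∀ c : Fin n, α x c → (y:ℕ) < (c:ℕ) → (b':ℕ) ≤ (c:ℕ) := fun c h1 h2 =>
      Finset.min'_le _ c (Finset.mem_filter.mpr ⟨Finset.mem_univ c, h1, h2⟩)
    have hgap : ∀ c : Fin n, α x c → ¬((x:ℕ) < (c:ℕ) ∧ (c:ℕ) < (b':ℕ)) := by
      intro c hc hcc
      rcases lt_trichotomy (c:ℕ) (y:ℕ) with h | h | h
      · have := shapeInt c x (α.symm' hc) hcc.1 h
        omega
      · exact hnxy (α.symm' (acast h (α.symm' hc)))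
      · have := hb'min c hc h
        omega
    have sat : ∀ u v : Fin n, α u v → (y:ℕ) ≤ (u:ℕ) → (u:ℕ) < (b':ℕ) →
        ((y:ℕ) ≤ (v:ℕ) ∧ (v:ℕ) < (b':ℕ)) := by
      intro u v huv h1 h2
      by_contra hcon2
      have hvcases : (v:ℕ) < (y:ℕ) ∨ (b':ℕ) ≤ (v:ℕ) := by omega
      rcases eq_or_lt_of_le h1 with hu | hu
      · -- u = y
        have hyv : α y v := acast hu.symm huv
        rcases hvcases with hv | hv
        · rcases lt_trichotomy (v:ℕ) (x:ℕ) with hv2 | hv2 | hv2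
          · have hvx : α v x := nc_mid hα hv2 hxy (by omega) (α.symm' hyv) hb'mem.1
            exact hnxy (α.trans' (α.symm' hvx) (α.symm' hyv))
          · exact hnxy (acast hv2 (α.symm' hyv))
          · have := shapeInt v y (α.symm' hyv) hv2 hv
            omega
        · rcases eq_or_lt_of_le hv with hv3 | hv3
          · exact hnxy (α.trans' hb'mem.1 (acast hv3.symm (α.symm' hyv)))
          · exact hnxy (nc_mid hα hxy (by omega) hv3 hb'mem.1 hyv)
      · -- y < u < b', so u is not in the class of x
        have hnxu : ¬ α x u := fun hc => hgap u hc ⟨by omega, h2⟩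
        rcases hvcases with hv | hv
        · rcases lt_trichotomy (v:ℕ) (x:ℕ) with hv2 | hv2 | hv2
          · exact hnxu (α.trans' (α.symm' (nc_mid hα hv2 (by omega) h2 (α.symm' huv)
              hb'mem.1)) (α.symm' huv))
          · exact hnxu (acast hv2 (α.symm' huv))
          · rcases lt_trichotomy (v:ℕ) (y:ℕ) with hv3 | hv3 | hv3
            · have := shapeInt v u (α.symm' huv) hv2 hv3
              omega
            · omega
            · omega
        · rcases eq_or_lt_of_le hv with hv3 | hv3
          · exact hnxu (α.trans' hb'mem.1 (acast hv3.symm (α.symm' huv)))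
          · exact hnxu (nc_mid hα (by omega) h2 hv3 hb'mem.1 huv)
    have hkrel : krel' α y b' := by
      intro a b hab
      have h1 := sat a b hab
      have h2 := sat b a (α.symm' hab)
      omega
    have hδyb' : δ y b' := δ.trans' (δ.symm' hδxy) (hαδ' hb'mem.1)
    exact absurd (hmeet y b' hδyb' hkrel) (Fin.ne_of_val_ne (by omega))
  · -- no element of the class of x beyond y; then e < x
    have hex : (e:ℕ) < (x:ℕ) := by
      rcases he with h | h
      · exact absurd ⟨e, Finset.mem_filter.mpr ⟨Finset.mem_univ e, hxe, h⟩⟩ hright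
      · exact h
    have hMx : ∀ c : Fin n, α x c → (c:ℕ) ≤ (x:ℕ) := by
      intro c hc
      by_contra hcc
      push_neg at hcc
      rcases lt_trichotomy (c:ℕ) (y:ℕ) with h | h | h
      · have := shapeInt c x (α.symm' hc) hcc h
        omega
      · exact hnxy (α.symm' (acast h (α.symm' hc)))
      · exact hright ⟨c, Finset.mem_filter.mpr ⟨Finset.mem_univ c, hc, h⟩⟩
    have ha0ne : (Finset.univ.filter (fun c : Fin n => α x c)).Nonempty :=
      ⟨x, Finset.mem_filter.mpr ⟨Finset.mem_univ x, α.refl' x⟩⟩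
    set a0 := (Finset.univ.filter (fun c : Fin n => α x c)).min' ha0ne with ha0
    have ha0mem : α x a0 := (Finset.mem_filter.mp (Finset.min'_mem _ ha0ne)).2
    have ha0min : ∀ c : Fin n, α x c → (a0:ℕ) ≤ (c:ℕ) := fun c h1 =>
      Finset.min'_le _ c (Finset.mem_filter.mpr ⟨Finset.mem_univ c, h1⟩)
    have ha0x : (a0:ℕ) < (x:ℕ) := lt_of_le_of_lt (ha0min e hxe) hex
    have sat : ∀ u v : Fin n, α u v → (a0:ℕ) ≤ (u:ℕ) → (u:ℕ) < (y:ℕ) →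
        ((a0:ℕ) ≤ (v:ℕ) ∧ (v:ℕ) < (y:ℕ)) := by
      intro u v huv h1 h2
      by_cases hxu : α x u
      · have hxv : α x v := α.trans' hxu huv
        have := ha0min v hxv
        have := hMx v hxv
        omega
      · rcases lt_trichotomy (u:ℕ) (x:ℕ) with hu | hu | hu
        · -- a0 ≤ u < x, u not in class of x
          have hu0 : (a0:ℕ) < (u:ℕ) := by
            rcases eq_or_lt_of_le h1 with h3 | h3
            · exact absurd (α.symm' (acast h3 (α.symm' ha0mem))) hxu
            · exact h3
          by_contra hcon2
          have hvcases : (v:ℕ) < (a0:ℕ) ∨ (y:ℕ) ≤ (v:ℕ) := by omega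
          have ha0xp : α a0 x := α.symm' ha0mem
          rcases hvcases with hv | hv
          · have hva0 : α v a0 := nc_mid hα hv hu0 hu (α.symm' huv) ha0xp
            exact hxu (α.trans' (α.trans' ha0mem (α.trans' (α.symm' hva0)
              (α.symm' huv))) (α.refl' u))
          · rcases eq_or_lt_of_le hv with hv3 | hv3
            · have huy : α u y := α.symm' (acast hv3.symm (α.symm' huv))
              have ha0u : α a0 u := nc_mid hα hu0 hu hxy ha0xp huy
              exact hxu (α.trans' ha0mem ha0u)
            · have ha0u : α a0 u := nc_mid hα hu0 hu (by omega) ha0xp huv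
              exact hxu (α.trans' ha0mem ha0u)
        · exact absurd (α.symm' (acast hu.symm (α.refl' x))) hxu
        · have := shapeInt u v huv hu h2
          omega
    have hkrel : krel' α a0 y := by
      intro a b hab
      have h1 := sat a b hab
      have h2 := sat b a (α.symm' hab)
      omega
    have hδa0y : δ a0 y := δ.trans' (δ.symm' (hαδ' ha0mem)) hδxy
    exact absurd (hmeet a0 y hδa0y hkrel) (Fin.ne_of_val_ne (by omega))
end Krew5
section Krew6
variable {n : ℕ}

theorem half_lt {x : Fin (2*n)} : (x:ℕ)/2 < n := by have := x.isLt; omega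

theorem shuffle2_rel_iff {α γ : Setoid (Fin n)} {x y : Fin (2*n)} :
    shuffle2 α γ x y ↔
      (((x:ℕ) % 2 = 0 ∧ (y:ℕ) % 2 = 0 ∧ α ⟨(x:ℕ)/2, half_lt⟩ ⟨(y:ℕ)/2, half_lt⟩) ∨
       ((x:ℕ) % 2 = 1 ∧ (y:ℕ) % 2 = 1 ∧ γ ⟨(x:ℕ)/2, half_lt⟩ ⟨(y:ℕ)/2, half_lt⟩)) := by
  show sumSetoid α γ (decode2 n x) (decode2 n y) ↔ _
  rcases Nat.mod_two_eq_zero_or_one (x:ℕ) with hx | hx <;>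
    rcases Nat.mod_two_eq_zero_or_one (y:ℕ) with hy | hy
  · rw [show decode2 n x = Sum.inl ⟨(x:ℕ)/2, half_lt⟩ from by simp [decode2, hx],
        show decode2 n y = Sum.inl ⟨(y:ℕ)/2, half_lt⟩ from by simp [decode2, hy]]
    show α _ _ ↔ _
    refine ⟨fun h => Or.inl ⟨hx, hy, h⟩, fun h => ?_⟩
    rcases h with ⟨_, _, h⟩ | ⟨h0, _, _⟩
    · exact h
    · omega
  · rw [show decode2 n x = Sum.inl ⟨(x:ℕ)/2, half_lt⟩ from by simp [decode2, hx],
        show decode2 n y = Sum.inr ⟨(y:ℕ)/2, half_lt⟩ from by simp [decode2, hy]]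
    show False ↔ _
    refine ⟨fun h => h.elim, fun h => ?_⟩
    rcases h with ⟨_, h0, _⟩ | ⟨h0, _, _⟩ <;> omega
  · rw [show decode2 n x = Sum.inr ⟨(x:ℕ)/2, half_lt⟩ from by simp [decode2, hx],
        show decode2 n y = Sum.inl ⟨(y:ℕ)/2, half_lt⟩ from by simp [decode2, hy]]
    show False ↔ _
    refine ⟨fun h => h.elim, fun h => ?_⟩
    rcases h with ⟨h0, _, _⟩ | ⟨_, h0, _⟩ <;> omega
  · rw [show decode2 n x = Sum.inr ⟨(x:ℕ)/2, half_lt⟩ from by simp [decode2, hx],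
        show decode2 n y = Sum.inr ⟨(y:ℕ)/2, half_lt⟩ from by simp [decode2, hy]]
    show γ _ _ ↔ _
    refine ⟨fun h => Or.inr ⟨hx, hy, h⟩, fun h => ?_⟩
    rcases h with ⟨h0, _, _⟩ | ⟨_, _, h⟩
    · omega
    · exact h

theorem shuffle2_even {α γ : Setoid (Fin n)} {a b : Fin n}
    (h : α a b) (ha : 2*(a:ℕ) < 2*n) (hb : 2*(b:ℕ) < 2*n) :
    shuffle2 α γ ⟨2*(a:ℕ), ha⟩ ⟨2*(b:ℕ), hb⟩ := by
  rw [shuffle2_rel_iff]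
  left
  refine ⟨show (2*(a:ℕ)) % 2 = 0 by omega, show (2*(b:ℕ)) % 2 = 0 by omega, ?_⟩
  have e1 : (⟨((⟨2*(a:ℕ), ha⟩ : Fin (2*n)):ℕ)/2, half_lt⟩ : Fin n) = a :=
    Fin.ext (show (2*(a:ℕ))/2 = (a:ℕ) by omega)
  have e2 : (⟨((⟨2*(b:ℕ), hb⟩ : Fin (2*n)):ℕ)/2, half_lt⟩ : Fin n) = b :=
    Fin.ext (show (2*(b:ℕ))/2 = (b:ℕ) by omega)
  rw [e1, e2]
  exact h

theorem shuffle2_odd {α γ : Setoid (Fin n)} {a b : Fin n}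
    (h : γ a b) (ha : 2*(a:ℕ)+1 < 2*n) (hb : 2*(b:ℕ)+1 < 2*n) :
    shuffle2 α γ ⟨2*(a:ℕ)+1, ha⟩ ⟨2*(b:ℕ)+1, hb⟩ := by
  rw [shuffle2_rel_iff]
  right
  refine ⟨show (2*(a:ℕ)+1) % 2 = 1 by omega, show (2*(b:ℕ)+1) % 2 = 1 by omega, ?_⟩
  have e1 : (⟨((⟨2*(a:ℕ)+1, ha⟩ : Fin (2*n)):ℕ)/2, half_lt⟩ : Fin n) = a :=
    Fin.ext (show (2*(a:ℕ)+1)/2 = (a:ℕ) by omega)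
  have e2 : (⟨((⟨2*(b:ℕ)+1, hb⟩ : Fin (2*n)):ℕ)/2, half_lt⟩ : Fin n) = b :=
    Fin.ext (show (2*(b:ℕ)+1)/2 = (b:ℕ) by omega)
  rw [e1, e2]
  exact h

theorem admissible_iff {α γ : NCP n} : Admissible2 α γ ↔ γ.1 ≤ krel α.1 := by
  constructor
  · intro hS
    have claim : ∀ j k a b : Fin n, (j:ℕ) < (k:ℕ) → γ.1 j k → α.1 a b →
        (j:ℕ) < (a:ℕ) → (a:ℕ) ≤ (k:ℕ) → ((j:ℕ) < (b:ℕ) ∧ (b:ℕ) ≤ (k:ℕ)) := by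
      intro j k a b hjk hγjk hαab ha1 ha2
      by_contra hcon
      have hb : (b:ℕ) ≤ (j:ℕ) ∨ (k:ℕ) < (b:ℕ) := by omega
      have hoj : 2*(j:ℕ)+1 < 2*n := by have := k.isLt; omega
      have hok : 2*(k:ℕ)+1 < 2*n := by have := k.isLt; omega
      have hea : 2*(a:ℕ) < 2*n := by have := a.isLt; omega
      have heb : 2*(b:ℕ) < 2*n := by have := b.isLt; omega
      rcases hb with hb | hb
      · have hmix := hS ⟨2*(b:ℕ), heb⟩ ⟨2*(j:ℕ)+1, hoj⟩ ⟨2*(a:ℕ), hea⟩ ⟨2*(k:ℕ)+1, hok⟩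
          (by simp [Fin.lt_def]; omega) (by simp [Fin.lt_def]; omega)
          (by simp [Fin.lt_def]; omega)
          (shuffle2_even (α.1.symm' hαab) heb hea) (shuffle2_odd hγjk hoj hok)
        rw [shuffle2_rel_iff] at hmix
        simp only at hmix
        omega
      · have hmix := hS ⟨2*(j:ℕ)+1, hoj⟩ ⟨2*(a:ℕ), hea⟩ ⟨2*(k:ℕ)+1, hok⟩ ⟨2*(b:ℕ), heb⟩
          (by simp [Fin.lt_def]; omega) (by simp [Fin.lt_def]; omega)
          (by simp [Fin.lt_def]; omega)
          (shuffle2_odd hγjk hoj hok) (shuffle2_even hαab hea heb)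
        rw [shuffle2_rel_iff] at hmix
        simp only at hmix
        omega
    rw [Setoid.le_def]
    intro j k hjk a b hab
    rcases lt_trichotomy (j:ℕ) (k:ℕ) with h | h | h
    · have h1 := fun h1 h2 => claim j k a b h hjk hab h1 h2
      have h2 := fun h1 h2 => claim j k b a h hjk (α.1.symm' hab) h1 h2
      omega
    · omega
    · have h1 := fun h1 h2 => claim k j a b h (γ.1.symm' hjk) hab h1 h2
      have h2 := fun h1 h2 => claim k j b a h (γ.1.symm' hjk) (α.1.symm' hab) h1 h2
      omega
  · intro hle
    have hle' : ∀ {u v : Fin n}, γ.1 u v → krel α.1 u v := fun h => Setoid.le_def.mp hle h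
    intro p q r s hpq hqr hrs hpr hqs
    have hpq' : (p:ℕ) < (q:ℕ) := hpq
    have hqr' : (q:ℕ) < (r:ℕ) := hqr
    have hrs' : (r:ℕ) < (s:ℕ) := hrs
    rw [shuffle2_rel_iff] at hpr hqs ⊢
    rcases hpr with ⟨hp0, hr0, hαpr⟩ | ⟨hp1, hr1, hγpr⟩ <;>
      rcases hqs with ⟨hq0, hs0, hαqs⟩ | ⟨hq1, hs1, hγqs⟩
    · -- all even : use noncrossingness of α
      left
      refine ⟨hp0, hq0, ?_⟩
      exact α.2 _ _ _ _ (by simp [Fin.lt_def]; omega) (by simp [Fin.lt_def]; omega)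
        (by simp [Fin.lt_def]; omega) hαpr hαqs
    · -- α-pair (p,r) crosses γ-pair (q,s) : contradiction with γ ≤ krel α
      exfalso
      have := hle' hγqs _ _ hαpr
      simp only at this
      omega
    · exfalso
      have := hle' hγpr _ _ hαqs
      simp only at this
      omega
    · right
      refine ⟨hp1, hq1, ?_⟩
      exact γ.2 _ _ _ _ (by simp [Fin.lt_def]; omega) (by simp [Fin.lt_def]; omega)
        (by simp [Fin.lt_def]; omega) hγpr hγqs

end Krew6
section Krew7
variable {n : ℕ}

theorem rcast {m : ℕ} {α : Setoid (Fin m)} {a b c d : Fin m} (h1 : (a:ℕ) = (b:ℕ))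
    (h2 : (c:ℕ) = (d:ℕ)) (hr : α a c) : α b d := by
  rwa [show a = b from Fin.ext h1, show c = d from Fin.ext h2] at hr

theorem rel_of_val_eq {m : ℕ} {α : Setoid (Fin m)} {a b : Fin m} (h : (a:ℕ) = (b:ℕ)) :
    α a b := (show a = b from Fin.ext h) ▸ α.refl' a

theorem setoidTop_rel {m : ℕ} (x y : Fin m) : (⊤ : Setoid (Fin m)) x y := by
  rw [show ((⊤ : Setoid (Fin m)) : Fin m → Fin m → Prop) = ⊤ from Setoid.top_def]
  trivial

theorem npow2_top : (npow 2 (⊤ : NCP n)).1 = (⊤ : Setoid (Fin (2*n))) :=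
  Setoid.ext fun _ _ => ⟨fun _ => setoidTop_rel _ _, fun _ => setoidTop_rel _ _⟩

theorem npow2_inj {σ τ : NCP n} (h : (npow 2 σ).1 = (npow 2 τ).1) : σ = τ := by
  apply Subtype.ext
  apply Setoid.ext
  intro a b
  have ha : 2*(a:ℕ) < 2*n := by have := a.isLt; omega
  have hb : 2*(b:ℕ) < 2*n := by have := b.isLt; omega
  have hiff := Setoid.ext_iff.mp h (⟨2*(a:ℕ), ha⟩ : Fin (2*n)) (⟨2*(b:ℕ), hb⟩ : Fin (2*n))
  have e1 : (a:ℕ) = (2*(a:ℕ))/2 := by omega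
  have e2 : (b:ℕ) = (2*(b:ℕ))/2 := by omega
  constructor
  · intro hr
    have h1 : (npow 2 σ).1 ⟨2*(a:ℕ), ha⟩ ⟨2*(b:ℕ), hb⟩ := rcast (α := σ.1) e1 e2 hr
    have h2 : τ.1 (⟨(2*(a:ℕ))/2, by omega⟩ : Fin n) (⟨(2*(b:ℕ))/2, by omega⟩ : Fin n) :=
      hiff.mp h1
    exact rcast e1.symm e2.symm h2
  · intro hr
    have h1 : (npow 2 τ).1 ⟨2*(a:ℕ), ha⟩ ⟨2*(b:ℕ), hb⟩ := rcast (α := τ.1) e1 e2 hr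
    have h2 : σ.1 (⟨(2*(a:ℕ))/2, by omega⟩ : Fin n) (⟨(2*(b:ℕ))/2, by omega⟩ : Fin n) :=
      hiff.mpr h1
    exact rcast e1.symm e2.symm h2

/-- `comp α γ = ⊤` iff the only noncrossing partition coarsening both `α` and `γ`
is the full partition. -/
theorem comp_eq_top_iff {α γ : NCP n} :
    comp α γ = ⊤ ↔ ∀ τ : NCP n, α.1 ≤ τ.1 → γ.1 ≤ τ.1 → τ = ⊤ := by
  constructor
  · intro h τ h1 h2
    -- npow 2 τ is a noncrossing coarsening of the shuffle and the interval partition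
    have hmem : IsNoncrossing (npow 2 τ).1 ∧ shuffle2 α.1 γ.1 ≤ (npow 2 τ).1 ∧
        intervalSetoid 2 n ≤ (npow 2 τ).1 := by
      refine ⟨(npow 2 τ).2, ?_, ?_⟩
      · rw [Setoid.le_def]
        intro x y hxy
        rcases shuffle2_rel_iff.mp hxy with ⟨_, _, hr⟩ | ⟨_, _, hr⟩
        · exact Setoid.le_def.mp h1 hr
        · exact Setoid.le_def.mp h2 hr
      · rw [Setoid.le_def]
        intro x y hxy
        have hxy' : (x:ℕ)/2 = (y:ℕ)/2 := hxy
        exact rel_of_val_eq (α := τ.1) hxy'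
    have hle : ncSup (shuffle2 α.1 γ.1) (intervalSetoid 2 n) ≤ (npow 2 τ).1 := sInf_le hmem
    rw [comp, nroot] at h
    by_cases hex : ∃ σ : NCP n, (npow 2 σ).1 = ncSup (shuffle2 α.1 γ.1) (intervalSetoid 2 n)
    · rw [dif_pos hex] at h
      have hspec := hex.choose_spec
      rw [h] at hspec
      rw [← hspec] at hle
      -- npow 2 ⊤ ≤ npow 2 τ  ⇒ τ = ⊤
      apply le_antisymm le_top
      show (⊤ : NCP n).1 ≤ τ.1
      rw [Setoid.le_def]
      intro a b _
      have ha : 2*(a:ℕ) < 2*n := by have := a.isLt; omega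
      have hb : 2*(b:ℕ) < 2*n := by have := b.isLt; omega
      have htop : (npow 2 (⊤ : NCP n)).1 ⟨2*(a:ℕ), ha⟩ ⟨2*(b:ℕ), hb⟩ := by
        rw [npow2_top]
        exact setoidTop_rel _ _
      have h3 : (npow 2 τ).1 ⟨2*(a:ℕ), ha⟩ ⟨2*(b:ℕ), hb⟩ := Setoid.le_def.mp hle htop
      exact rcast (show ((2*(a:ℕ))/2 : ℕ) = (a:ℕ) by omega)
        (show ((2*(b:ℕ))/2 : ℕ) = (b:ℕ) by omega) h3
    · rw [dif_neg hex] at h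
      exact le_antisymm le_top (h ▸ (bot_le : (⊥ : NCP n) ≤ τ))
  · intro hJT
    have hS : ncSup (shuffle2 α.1 γ.1) (intervalSetoid 2 n) = ⊤ := by
      apply le_antisymm le_top
      apply le_sInf
      intro σ hσ
      obtain ⟨hσnc, hσsh, hσint⟩ := hσ
      have hσsh' : ∀ {u v : Fin (2*n)}, shuffle2 α.1 γ.1 u v → σ u v :=
        fun h => Setoid.le_def.mp hσsh h
      have hσint' : ∀ {u v : Fin (2*n)}, (u:ℕ)/2 = (v:ℕ)/2 → σ u v :=
        fun h => Setoid.le_def.mp hσint h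
      set f : Fin n → Fin (2*n) := fun a => ⟨2*(a:ℕ), by have := a.isLt; omega⟩ with hf
      have hfmono : Monotone f := fun a b hab => by
        show (2*(a:ℕ) : ℕ) ≤ 2*(b:ℕ)
        have : (a:ℕ) ≤ (b:ℕ) := hab
        omega
      have hτnc : IsNoncrossing (Setoid.comap f σ) :=
        isNoncrossing_comap_of_monotone f hfmono hσnc
      set τ : NCP n := ⟨Setoid.comap f σ, hτnc⟩ with hτ
      have hατ : α.1 ≤ τ.1 := Setoid.le_def.mpr fun {a b} h =>
        hσsh' (shuffle2_even h (by have := a.isLt; omega) (by have := b.isLt; omega))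
      have hγτ : γ.1 ≤ τ.1 := by
        rw [Setoid.le_def]
        intro a b h
        have ha : 2*(a:ℕ)+1 < 2*n := by have := a.isLt; omega
        have hb : 2*(b:ℕ)+1 < 2*n := by have := b.isLt; omega
        have h1 : σ (f a) ⟨2*(a:ℕ)+1, ha⟩ :=
          hσint' (show (2*(a:ℕ))/2 = (2*(a:ℕ)+1)/2 by omega)
        have h2 : σ ⟨2*(a:ℕ)+1, ha⟩ ⟨2*(b:ℕ)+1, hb⟩ := hσsh' (shuffle2_odd h ha hb)
        have h3 : σ (f b) ⟨2*(b:ℕ)+1, hb⟩ :=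
          hσint' (show (2*(b:ℕ))/2 = (2*(b:ℕ)+1)/2 by omega)
        exact σ.trans' (σ.trans' h1 h2) (σ.symm' h3)
      have hτtop : τ = ⊤ := hJT τ hατ hγτ
      -- now σ = ⊤apply, i.e. ⊤ ≤ σ
      rw [Setoid.le_def]
      intro x y _
      have h1 : σ x (f ⟨(x:ℕ)/2, half_lt⟩) :=
        hσint' (show (x:ℕ)/2 = (2*((x:ℕ)/2))/2 by omega)
      have h2 : σ y (f ⟨(y:ℕ)/2, half_lt⟩) :=
        hσint' (show (y:ℕ)/2 = (2*((y:ℕ)/2))/2 by omega)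
      have h3 : τ.1 ⟨(x:ℕ)/2, half_lt⟩ ⟨(y:ℕ)/2, half_lt⟩ := by
        rw [hτtop]
        exact setoidTop_rel _ _
      exact σ.trans' (σ.trans' h1 (h3 : σ _ _)) (σ.symm' h2)
    rw [comp, hS, nroot]
    have hex : ∃ σ : NCP n, (npow 2 σ).1 = (⊤ : Setoid (Fin (2*n))) := ⟨⊤, npow2_top⟩
    rw [dif_pos hex]
    exact npow2_inj (hex.choose_spec.trans npow2_top.symm)

end Krew7
section Krew8
variable {n : ℕ}

theorem kreweras_eq (α : NCP n) :
    kreweras α = ⟨krel α.1, krel_isNoncrossing α.1⟩ := by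
  set K : NCP n := ⟨krel α.1, krel_isNoncrossing α.1⟩ with hK
  have hadm : Admissible2 α K := admissible_iff.mpr (le_refl _)
  have hcomp : comp α K = ⊤ := comp_eq_top_iff.mpr (fun τ h1 h2 =>
    Subtype.ext (krel_joinTop α.2 h1 h2))
  have hex : ∃ γ : NCP n, Admissible2 α γ ∧ comp α γ = ⊤ := ⟨K, hadm, hcomp⟩
  have huniq : ∀ γ : NCP n, Admissible2 α γ → comp α γ = ⊤ → γ = K := by
    intro γ hA hC
    have hγk : γ.1 ≤ krel α.1 := admissible_iff.mp hA
    have hJT := comp_eq_top_iff.mp hC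
    have hmeet : ∀ j k : Fin n, (krel' γ.1) j k → krel' α.1 j k → j = k := by
      intro j k h1 h2
      set β : NCP n := ⟨krel' α.1 ⊓ krel' γ.1,
        inf_isNoncrossing (krel'_isNoncrossing _) (krel'_isNoncrossing _)⟩ with hβ
      have hβ1 : β.1 ≤ krel' α.1 := inf_le_left
      have hβ2 : β.1 ≤ krel' γ.1 := inf_le_right
      have hτ1 : α.1 ≤ krel β.1 := le_krel_iff.mpr hβ1
      have hτ2 : γ.1 ≤ krel β.1 := le_krel_iff.mpr hβ2
      have htop := hJT ⟨krel β.1, krel_isNoncrossing _⟩ hτ1 hτ2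
      have hbot : β.1 = ⊥ := eq_bot_of_krel_eq_top (congrArg Subtype.val htop)
      have hβjk : β.1 j k := by
        rw [show ((β.1 : Setoid (Fin n)) : Fin n → Fin n → Prop) =
          ⇑(krel' α.1) ⊓ ⇑(krel' γ.1) from Setoid.inf_def]
        exact ⟨h2, h1⟩
      rw [hbot] at hβjk
      rwa [show ((⊥ : Setoid (Fin n)) : Fin n → Fin n → Prop) = (· = ·)
        from Setoid.bot_def] at hβjk
    have hαδ : α.1 ≤ krel' γ.1 := le_krel_iff.mp hγk
    have hδα : krel' γ.1 ≤ α.1 := uniq_above α.2 (krel'_isNoncrossing _) hαδ hmeet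
    have heq : krel' γ.1 = α.1 := le_antisymm hδα hαδ
    apply Subtype.ext
    calc γ.1 = krel (krel' γ.1) := (krel_krel' γ.2).symm
      _ = krel α.1 := by rw [heq]
  rw [kreweras, dif_pos hex]
  exact huniq _ hex.choose_spec.1 hex.choose_spec.2
end Krew8
/-- **Statement 13.** For every `α ∈ NCP(n)`, the intervals `[0_n, α]` and
`[K(α), 1_n]` are anti-isomorphic as lattices. -/
theorem interval_antiIso_kreweras (n : ℕ) (α : NCP n) :
    Nonempty ((↥(Set.Icc (⊥ : NCP n) α)) ≃o (↥(Set.Icc (kreweras α) (⊤ : NCP n)))ᵒᵈ) := by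
  rw [kreweras_eq α]
  set K : NCP n := ⟨krel α.1, krel_isNoncrossing α.1⟩ with hK
  have hmemto : ∀ g : ↥(Set.Icc (⊥ : NCP n) α),
      (⟨krel g.1.1, krel_isNoncrossing _⟩ : NCP n) ∈ Set.Icc K (⊤ : NCP n) := by
    intro g
    refine ⟨?_, le_top⟩
    show krel α.1 ≤ krel g.1.1
    exact krel_anti (g.2.2 : g.1.1 ≤ α.1)
  have hmeminv : ∀ d : ↥(Set.Icc K (⊤ : NCP n)),
      (⟨krel' d.1.1, krel'_isNoncrossing _⟩ : NCP n) ∈ Set.Icc (⊥ : NCP n) α := by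
    intro d
    refine ⟨bot_le, ?_⟩
    show krel' d.1.1 ≤ α.1
    have h := krel'_anti (d.2.1 : krel α.1 ≤ d.1.1)
    rwa [krel'_krel α.2] at h
  refine ⟨⟨⟨fun g => OrderDual.toDual ⟨⟨krel g.1.1, krel_isNoncrossing _⟩, hmemto g⟩,
    fun d => ⟨⟨krel' (OrderDual.ofDual d).1.1, krel'_isNoncrossing _⟩,
      hmeminv (OrderDual.ofDual d)⟩, ?_, ?_⟩, ?_⟩⟩
  · intro g
    apply Subtype.ext
    apply Subtype.ext
    show krel' (krel g.1.1) = g.1.1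
    exact krel'_krel g.1.2
  · intro d
    apply Subtype.ext
    apply Subtype.ext
    show krel (krel' (OrderDual.ofDual d).1.1) = (OrderDual.ofDual d).1.1
    exact krel_krel' (OrderDual.ofDual d).1.2
  · intro a b
    constructor
    · intro h
      have h' : krel b.1.1 ≤ krel a.1.1 := h
      have h2 := krel'_anti h'
      rw [krel'_krel a.1.2, krel'_krel b.1.2] at h2
      exact h2
    · intro h
      show krel b.1.1 ≤ krel a.1.1
      exact krel_anti (h : a.1.1 ≤ b.1.1)
end

section
/- Assume that (α, β, γ) is an n-admissible triple in NCP(n). Then K_{α∘β∘γ}(α ∘ β) = γ = K_{K_{α∘β∘γ}(α)}(K_{α∘β}(α)). -/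
open scoped BigOperators

namespace NCPaux

open Relation

variable {n : ℕ}

/-- even position -/
def ev (i : Fin n) : Fin (2*n) := ⟨2*i.val, by have := i.isLt; omega⟩
/-- odd position -/
def od (i : Fin n) : Fin (2*n) := ⟨2*i.val+1, by have := i.isLt; omega⟩

@[simp] lemma ev_val (i : Fin n) : (ev i).val = 2*i.val := rfl
@[simp] lemma od_val (i : Fin n) : (od i).val = 2*i.val+1 := rfl

lemma decode2_ev (i : Fin n) : decode2 n (ev i) = Sum.inl i := by
  have h : ((ev i).val) % 2 = 0 := by simp
  unfold decode2
  rw [if_pos h]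
  congr 1
  exact Fin.ext (by show ((ev i).val)/2 = i.val; rw [ev_val]; omega)

lemma decode2_od (i : Fin n) : decode2 n (od i) = Sum.inr i := by
  have h : ¬ ((od i).val % 2 = 0) := by simp
  unfold decode2
  rw [if_neg h]
  congr 1
  exact Fin.ext (by show ((od i).val)/2 = i.val; rw [od_val]; omega)

variable {a d : Setoid (Fin n)}

lemma shuffle_ee {i j : Fin n} : shuffle2 a d (ev i) (ev j) ↔ a i j := by
  show sumSetoid a d (decode2 n (ev i)) (decode2 n (ev j)) ↔ _
  rw [decode2_ev, decode2_ev]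
  exact Iff.rfl

lemma shuffle_oo {i j : Fin n} : shuffle2 a d (od i) (od j) ↔ d i j := by
  show sumSetoid a d (decode2 n (od i)) (decode2 n (od j)) ↔ _
  rw [decode2_od, decode2_od]
  exact Iff.rfl

lemma shuffle_eo {i j : Fin n} : shuffle2 a d (ev i) (od j) → False := by
  intro h
  have h' : sumSetoid a d (decode2 n (ev i)) (decode2 n (od j)) := h
  rw [decode2_ev, decode2_od] at h'
  exact h'

lemma ev_or_od (x : Fin (2*n)) : (∃ i, x = ev i) ∨ (∃ i, x = od i) := by
  have hx := x.isLt
  rcases Nat.even_or_odd x.val with ⟨i, hi⟩ | ⟨i, hi⟩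
  · exact Or.inl ⟨⟨i, by omega⟩, Fin.ext (by simp [ev]; omega)⟩
  · exact Or.inr ⟨⟨i, by omega⟩, Fin.ext (by simp [od]; omega)⟩

section Fcross

/-- crossing pattern: α-pair over left end of δ-pair -/
lemma F1 (hσ : IsNoncrossing (shuffle2 a d)) {i j k l : Fin n} (hij : a i j) (hkl : d k l)
    (h1 : i.val ≤ k.val) (h2 : k.val < j.val) (h3 : j.val ≤ l.val) : False := by
  refine shuffle_eo (i := i) (j := k)
    (hσ (ev i) (od k) (ev j) (od l) ?_ ?_ ?_ (shuffle_ee.mpr hij) (shuffle_oo.mpr hkl))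
  · exact Fin.lt_def.mpr (by simp; omega)
  · exact Fin.lt_def.mpr (by simp; omega)
  · exact Fin.lt_def.mpr (by simp; omega)

/-- crossing pattern: α-pair over right end of δ-pair -/
lemma F2 (hσ : IsNoncrossing (shuffle2 a d)) {i j k l : Fin n} (hij : a i j) (hkl : d k l)
    (h1 : k.val < i.val) (h2 : i.val ≤ l.val) (h3 : l.val < j.val) : False := by
  have h := hσ (od k) (ev i) (od l) (ev j)
    (Fin.lt_def.mpr (by simp; omega))
    (Fin.lt_def.mpr (by simp; omega))
    (Fin.lt_def.mpr (by simp; omega))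
    (shuffle_oo.mpr hkl) (shuffle_ee.mpr hij)
  exact shuffle_eo ((shuffle2 a d).symm' h)

/-- two interleaved δ-pairs merge -/
lemma F3 (hσ : IsNoncrossing (shuffle2 a d)) {k l p q : Fin n} (hkl : d k l) (hpq : d p q)
    (h1 : k.val < p.val) (h2 : p.val ≤ l.val) (h3 : l.val < q.val) : d k p := by
  rcases eq_or_lt_of_le h2 with he | hlt
  · have : p = l := Fin.ext he
    rw [this]; exact hkl
  · exact shuffle_oo.mp
      (hσ (od k) (od p) (od l) (od q)
        (Fin.lt_def.mpr (by simp; omega))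
        (Fin.lt_def.mpr (by simp; omega))
        (Fin.lt_def.mpr (by simp; omega))
        (shuffle_oo.mpr hkl) (shuffle_oo.mpr hpq))

/-- the "no-crossing over the gap (b,c]" condition on `a` -/
def NC2 (a : Setoid (Fin n)) (b c : Fin n) : Prop :=
  ∀ i j : Fin n, a i j → ((b.val < i.val ∧ i.val ≤ c.val) ↔ (b.val < j.val ∧ j.val ≤ c.val))

lemma nc2_of_pair (hσ : IsNoncrossing (shuffle2 a d)) {k l : Fin n} (hkl : d k l) (h : k.val < l.val) : NC2 a k l := by
  have key : ∀ i j : Fin n, a i j → (k.val < i.val ∧ i.val ≤ l.val) →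
      (k.val < j.val ∧ j.val ≤ l.val) := by
    intro i j hij ⟨h1, h2⟩
    by_contra hc
    rcases (by omega : j.val ≤ k.val ∨ l.val < j.val) with hj | hj
    · exact F1 hσ (a.symm' hij) hkl hj h1 h2
    · exact F2 hσ hij hkl h1 h2 hj
  intro i j hij
  exact ⟨key i j hij, key j i (a.symm' hij)⟩

end Fcross

/-- single-step relation generating the join -/
def rel2 (a d : Setoid (Fin n)) (x y : Fin n) : Prop := a x y ∨ d x y

lemma rel2_symm : Symmetric (rel2 a d) := fun _ _ h =>
  h.elim (fun h' => Or.inl (a.symm' h')) (fun h' => Or.inr (d.symm' h'))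

lemma eqvGen_iff_rtg {α : Type*} {r : α → α → Prop} (hs : Symmetric r) {x y : α} :
    EqvGen r x y ↔ ReflTransGen r x y := by
  constructor
  · intro h
    induction h with
    | rel a b h => exact ReflTransGen.single h
    | refl => exact ReflTransGen.refl
    | symm a b _ ih => exact (haveI : Std.Symm r := ⟨fun _ _ h => hs h⟩; ReflTransGen.symmetric.symm _ _ ih)
    | trans a b c _ _ h1 h2 => exact h1.trans h2
  · intro h
    induction h with
    | refl => exact EqvGen.refl _
    | tail _ h ih => exact EqvGen.trans _ _ _ ih (EqvGen.rel _ _ h)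

lemma sup_rel_iff {x y : Fin n} : (a ⊔ d) x y ↔ ReflTransGen (rel2 a d) x y := by
  rw [Setoid.sup_eq_eqvGen]
  exact eqvGen_iff_rtg rel2_symm

/-- first-exit lemma: a chain from inside A to outside A crosses the boundary,
with the crossing point reachable from the start. -/
lemma first_exit {α : Type*} {r : α → α → Prop} {u v : α} (h : ReflTransGen r u v)
    (A : α → Prop) (hu : A u) (hv : ¬ A v) :
    ∃ x y, A x ∧ ¬ A y ∧ r x y ∧ ReflTransGen r u x := by
  induction h using ReflTransGen.head_induction_on with
  | refl => exact absurd hu hv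
  | head h hch ih =>
    rename_i p q
    by_cases hq : A q
    · obtain ⟨x, y, h1, h2, h3, h4⟩ := ih hq
      exact ⟨x, y, h1, h2, h3, ReflTransGen.head h h4⟩
    · exact ⟨p, q, hu, hq, h, ReflTransGen.refl⟩

end NCPaux
namespace NCPaux

open Relation

variable {n : ℕ} {a d : Setoid (Fin n)}

/-- Two sets of positions cross (in either orientation). -/
def Cross (X Y : Set (Fin n)) : Prop :=
  ∃ u v w z : Fin n, u.val < v.val ∧ v.val < w.val ∧ w.val < z.val ∧
    ((u ∈ X ∧ w ∈ X ∧ v ∈ Y ∧ z ∈ Y) ∨ (u ∈ Y ∧ w ∈ Y ∧ v ∈ X ∧ z ∈ X))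

lemma cross_symm {X Y : Set (Fin n)} (h : Cross X Y) : Cross Y X := by
  obtain ⟨u, v, w, z, h1, h2, h3, h4⟩ := h
  exact ⟨u, v, w, z, h1, h2, h3, h4.symm⟩

lemma mk_cross1 {X Y : Set (Fin n)} {u v w z : Fin n} (h1 : u.val < v.val) (h2 : v.val < w.val)
    (h3 : w.val < z.val) (m1 : u ∈ X) (m2 : w ∈ X) (m3 : v ∈ Y) (m4 : z ∈ Y) : Cross X Y :=
  ⟨u, v, w, z, h1, h2, h3, Or.inl ⟨m1, m2, m3, m4⟩⟩

lemma mk_cross2 {X Y : Set (Fin n)} {u v w z : Fin n} (h1 : u.val < v.val) (h2 : v.val < w.val)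
    (h3 : w.val < z.val) (m1 : u ∈ Y) (m2 : w ∈ Y) (m3 : v ∈ X) (m4 : z ∈ X) : Cross X Y :=
  ⟨u, v, w, z, h1, h2, h3, Or.inr ⟨m1, m2, m3, m4⟩⟩

lemma union_lemma {X Y Z : Set (Fin n)} (hXZ : ¬ Cross X Z) (hYZ : ¬ Cross Y Z)
    (hdX : ∀ t, t ∈ X → t ∉ Z) (hdY : ∀ t, t ∈ Y → t ∉ Z)
    (hXY : ∃ t, t ∈ X ∧ t ∈ Y) : ¬ Cross (X ∪ Y) Z := by
  obtain ⟨t, htX, htY⟩ := hXY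
  rintro ⟨u, v, w, z, h1, h2, h3, hor⟩
  rcases hor with ⟨hu, hw, hv, hz⟩ | ⟨hu, hw, hv, hz⟩
  · -- u, w ∈ X ∪ Y ; v, z ∈ Z
    rcases hu with hu | hu <;> rcases hw with hw | hw
    · exact hXZ (mk_cross1 h1 h2 h3 hu hw hv hz)
    case inr.inr => exact hYZ (mk_cross1 h1 h2 h3 hu hw hv hz)
    · -- u ∈ X, w ∈ Y
      rcases lt_trichotomy t.val v.val with ht | ht | ht
      · exact hYZ (mk_cross1 ht h2 h3 htY hw hv hz)
      · exact hdX t htX (by rw [show t = v from Fin.ext ht]; exact hv)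
      · rcases lt_trichotomy t.val z.val with ht2 | ht2 | ht2
        · exact hXZ (mk_cross1 h1 ht ht2 hu htX hv hz)
        · exact hdX t htX (by rw [show t = z from Fin.ext ht2]; exact hz)
        · exact hYZ (mk_cross2 h2 h3 ht2 hv hz hw htY)
    · -- u ∈ Y, w ∈ X
      rcases lt_trichotomy t.val v.val with ht | ht | ht
      · exact hXZ (mk_cross1 ht h2 h3 htX hw hv hz)
      · exact hdX t htX (by rw [show t = v from Fin.ext ht]; exact hv)
      · rcases lt_trichotomy t.val z.val with ht2 | ht2 | ht2
        · exact hYZ (mk_cross1 h1 ht ht2 hu htY hv hz)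
        · exact hdX t htX (by rw [show t = z from Fin.ext ht2]; exact hz)
        · exact hXZ (mk_cross2 h2 h3 ht2 hv hz hw htX)
  · -- u, w ∈ Z ; v, z ∈ X ∪ Y
    rcases hv with hv | hv <;> rcases hz with hz | hz
    · exact hXZ (mk_cross2 h1 h2 h3 hu hw hv hz)
    case inr.inr => exact hYZ (mk_cross2 h1 h2 h3 hu hw hv hz)
    · -- v ∈ X, z ∈ Y
      rcases lt_trichotomy t.val u.val with ht | ht | ht
      · exact hXZ (mk_cross1 ht h1 h2 htX hv hu hw)
      · exact hdX t htX (by rw [show t = u from Fin.ext ht]; exact hu)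
      · rcases lt_trichotomy t.val w.val with ht2 | ht2 | ht2
        · exact hYZ (mk_cross2 ht ht2 h3 hu hw htY hz)
        · exact hdX t htX (by rw [show t = w from Fin.ext ht2]; exact hw)
        · exact hXZ (mk_cross2 h1 h2 ht2 hu hw hv htX)
    · -- v ∈ Y, z ∈ X
      rcases lt_trichotomy t.val u.val with ht | ht | ht
      · exact hYZ (mk_cross1 ht h1 h2 htY hv hu hw)
      · exact hdX t htX (by rw [show t = u from Fin.ext ht]; exact hu)
      · rcases lt_trichotomy t.val w.val with ht2 | ht2 | ht2
        · exact hXZ (mk_cross2 ht ht2 h3 hu hw htX hz)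
        · exact hdX t htX (by rw [show t = w from Fin.ext ht2]; exact hw)
        · exact hYZ (mk_cross2 h1 h2 ht2 hu hw hv htY)

/-- the union of the `a`-class and `d`-class of a point -/
def Cls (a d : Setoid (Fin n)) (x : Fin n) : Set (Fin n) := {y | rel2 a d x y}

lemma mem_cls_self (x : Fin n) : x ∈ Cls a d x := Or.inl (a.refl' x)

lemma cls_eq_union (x : Fin n) :
    Cls a d x = {y | a x y} ∪ {y | d x y} := rfl

section Blocks

variable (hσ : IsNoncrossing (shuffle2 a d))

lemma no_cross_aa (hσ : IsNoncrossing (shuffle2 a d)) {x y : Fin n} (hxy : ¬ a x y) :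
    ¬ Cross {t | a x t} {t | a y t} := by
  rintro ⟨u, v, w, z, h1, h2, h3, hor⟩
  rcases hor with ⟨hu, hw, hv, hz⟩ | ⟨hu, hw, hv, hz⟩
  · have huw : a u w := a.trans' (a.symm' hu) hw
    have hvz : a v z := a.trans' (a.symm' hv) hz
    have := hσ (ev u) (ev v) (ev w) (ev z)
      (Fin.lt_def.mpr (by simp; omega)) (Fin.lt_def.mpr (by simp; omega))
      (Fin.lt_def.mpr (by simp; omega)) (shuffle_ee.mpr huw) (shuffle_ee.mpr hvz)
    have huv : a u v := shuffle_ee.mp this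
    exact hxy (a.trans' hu (a.trans' huv (a.symm' hv)))
  · have huw : a u w := a.trans' (a.symm' hu) hw
    have hvz : a v z := a.trans' (a.symm' hv) hz
    have := hσ (ev u) (ev v) (ev w) (ev z)
      (Fin.lt_def.mpr (by simp; omega)) (Fin.lt_def.mpr (by simp; omega))
      (Fin.lt_def.mpr (by simp; omega)) (shuffle_ee.mpr huw) (shuffle_ee.mpr hvz)
    have huv : a u v := shuffle_ee.mp this
    have hyv : a y v := a.trans' hu huv
    exact hxy (a.trans' hv (a.symm' hyv))

lemma no_cross_dd (hσ : IsNoncrossing (shuffle2 a d)) {x y : Fin n} (hxy : ¬ d x y) :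
    ¬ Cross {t | d x t} {t | d y t} := by
  rintro ⟨u, v, w, z, h1, h2, h3, hor⟩
  rcases hor with ⟨hu, hw, hv, hz⟩ | ⟨hu, hw, hv, hz⟩
  · have huw : d u w := d.trans' (d.symm' hu) hw
    have hvz : d v z := d.trans' (d.symm' hv) hz
    have := hσ (od u) (od v) (od w) (od z)
      (Fin.lt_def.mpr (by simp; omega)) (Fin.lt_def.mpr (by simp; omega))
      (Fin.lt_def.mpr (by simp; omega)) (shuffle_oo.mpr huw) (shuffle_oo.mpr hvz)
    have huv : d u v := shuffle_oo.mp this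
    exact hxy (d.trans' hu (d.trans' huv (d.symm' hv)))
  · have huw : d u w := d.trans' (d.symm' hu) hw
    have hvz : d v z := d.trans' (d.symm' hv) hz
    have := hσ (od u) (od v) (od w) (od z)
      (Fin.lt_def.mpr (by simp; omega)) (Fin.lt_def.mpr (by simp; omega))
      (Fin.lt_def.mpr (by simp; omega)) (shuffle_oo.mpr huw) (shuffle_oo.mpr hvz)
    have huv : d u v := shuffle_oo.mp this
    have hyv : d y v := d.trans' hu huv
    exact hxy (d.trans' hv (d.symm' hyv))

lemma no_cross_ad (hσ : IsNoncrossing (shuffle2 a d)) (x y : Fin n) :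
    ¬ Cross {t | a x t} {t | d y t} := by
  rintro ⟨u, v, w, z, h1, h2, h3, hor⟩
  rcases hor with ⟨hu, hw, hv, hz⟩ | ⟨hu, hw, hv, hz⟩
  · have huw : a u w := a.trans' (a.symm' hu) hw
    have hvz : d v z := d.trans' (d.symm' hv) hz
    exact shuffle_eo (hσ (ev u) (od v) (ev w) (od z)
      (Fin.lt_def.mpr (by simp; omega)) (Fin.lt_def.mpr (by simp; omega))
      (Fin.lt_def.mpr (by simp; omega)) (shuffle_ee.mpr huw) (shuffle_oo.mpr hvz))
  · have huw : d u w := d.trans' (d.symm' hu) hw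
    have hvz : a v z := a.trans' (a.symm' hv) hz
    have := hσ (od u) (ev v) (od w) (ev z)
      (Fin.lt_def.mpr (by simp; omega)) (Fin.lt_def.mpr (by simp; omega))
      (Fin.lt_def.mpr (by simp; omega)) (shuffle_oo.mpr huw) (shuffle_ee.mpr hvz)
    exact shuffle_eo ((shuffle2 a d).symm' this)

end Blocks

end NCPaux
namespace NCPaux

open Relation

variable {n : ℕ} {a d : Setoid (Fin n)}

lemma chain_cover {u v : Fin n} (h : ReflTransGen (rel2 a d) u v) :
    ∃ S : Set (Fin n), u ∈ S ∧ v ∈ S ∧ (∀ z ∈ S, ReflTransGen (rel2 a d) u z) ∧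
      ∀ Y : Set (Fin n),
        (∀ w, ReflTransGen (rel2 a d) u w →
            ((∀ y, rel2 a d w y → y ∉ Y) ∧ ¬ Cross (Cls a d w) Y)) →
        ¬ Cross S Y := by
  induction h with
  | refl =>
    refine ⟨Cls a d u, mem_cls_self u, mem_cls_self u, ?_, ?_⟩
    · intro z hz
      exact ReflTransGen.single hz
    · intro Y hY
      exact (hY u ReflTransGen.refl).2
  | tail huw hstep ih =>
    rename_i w v
    obtain ⟨S, huS, hwS, hmem, hprop⟩ := ih
    refine ⟨S ∪ Cls a d w, Or.inl huS, Or.inr hstep, ?_, ?_⟩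
    · rintro z (hz | hz)
      · exact hmem z hz
      · exact (hmem w hwS).tail hz
    · intro Y hY
      apply union_lemma (hprop Y hY) (hY w (hmem w hwS)).2
      · intro t ht
        exact (hY t (hmem t ht)).1 t (Or.inl (a.refl' t))
      · intro t ht
        exact (hY w (hmem w hwS)).1 t ht
      · exact ⟨w, hwS, mem_cls_self w⟩

lemma cls_no_cross (hσ : IsNoncrossing (shuffle2 a d)) {w w' : Fin n}
    (hsep : ∀ y y', rel2 a d w y → rel2 a d w' y' → y ≠ y') :
    ¬ Cross (Cls a d w) (Cls a d w') := by
  have hdis : ∀ (X' : Set (Fin n)), (∀ t, t ∈ X' → rel2 a d w t) →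
      ∀ t, t ∈ X' → t ∉ Cls a d w' := fun X' hX' t ht ht' => hsep t t (hX' t ht) ht' rfl
  have haa : ¬ a w w' := fun h => hsep w' w' (Or.inl h) (Or.inl (a.refl' w')) rfl
  have hdd : ¬ d w w' := fun h => hsep w' w' (Or.inr h) (Or.inr (d.refl' w')) rfl
  have h1 : ¬ Cross (Cls a d w) {t | a w' t} := by
    rw [cls_eq_union]
    apply union_lemma (no_cross_aa hσ haa)
      (fun hc => no_cross_ad hσ w' w (cross_symm hc))
    · exact fun t ht ht' => hsep t t (Or.inl ht) (Or.inl ht') rfl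
    · exact fun t ht ht' => hsep t t (Or.inr ht) (Or.inl ht') rfl
    · exact ⟨w, a.refl' w, d.refl' w⟩
  have h2 : ¬ Cross (Cls a d w) {t | d w' t} := by
    rw [cls_eq_union]
    apply union_lemma (no_cross_ad hσ w w') (no_cross_dd hσ hdd)
    · exact fun t ht ht' => hsep t t (Or.inl ht) (Or.inr ht') rfl
    · exact fun t ht ht' => hsep t t (Or.inr ht) (Or.inr ht') rfl
    · exact ⟨w, a.refl' w, d.refl' w⟩
  intro hc
  apply union_lemma (X := {t | a w' t}) (Y := {t | d w' t}) (Z := Cls a d w)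
    (fun hc' => h1 (cross_symm hc')) (fun hc' => h2 (cross_symm hc'))
    (fun t ht ht' => hsep t t ht' (Or.inl ht) rfl)
    (fun t ht ht' => hsep t t ht' (Or.inr ht) rfl)
    ⟨w', a.refl' w', d.refl' w'⟩
  rw [← cls_eq_union]
  exact cross_symm hc

/-- The join of two partitions with noncrossing shuffle is noncrossing. -/
theorem join_noncrossing (hσ : IsNoncrossing (shuffle2 a d)) :
    IsNoncrossing (a ⊔ d : Setoid (Fin n)) := by
  intro p q s t h1 h2 h3 hps hqt
  by_cases hcommon : ∃ z, (a ⊔ d : Setoid (Fin n)) p z ∧ (a ⊔ d : Setoid (Fin n)) q z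
  · obtain ⟨z, hz1, hz2⟩ := hcommon
    exact Setoid.trans' _ hz1 (Setoid.symm' _ hz2)
  · exfalso
    push_neg at hcommon
    have hps' := sup_rel_iff.mp hps
    have hqt' := sup_rel_iff.mp hqt
    obtain ⟨SA, hpA, hsA, hmemA, hpropA⟩ := chain_cover hps'
    obtain ⟨SB, hqB, htB, hmemB, hpropB⟩ := chain_cover hqt'
    have key : ∀ w w', ReflTransGen (rel2 a d) p w → ReflTransGen (rel2 a d) q w' →
        ∀ y y', rel2 a d w y → rel2 a d w' y' → y ≠ y' := by
      intro w w' hw hw' y y' hy hy' heq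
      subst heq
      exact hcommon y (sup_rel_iff.mpr (hw.tail hy)) (sup_rel_iff.mpr (hw'.tail hy'))
    apply hpropA SB
    · intro w hw
      constructor
      · intro y hy hyB
        exact key w y hw (hmemB y hyB) y y hy (Or.inl (a.refl' y)) rfl
      · intro hc
        apply hpropB (Cls a d w)
        · intro w' hw'
          refine ⟨fun y' hy' hy'' => key w w' hw hw' y' y' hy'' hy' rfl, ?_⟩
          exact cls_no_cross hσ (fun y y' h1 h2 =>
            fun he => key w w' hw hw' y' y h2 h1 he.symm)
        · exact cross_symm hc
    · exact mk_cross1 (u := p) (v := q) (w := s) (z := t)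
        (Fin.lt_def.mp h1) (Fin.lt_def.mp h2) (Fin.lt_def.mp h3) hpA hsA hqB htB

end NCPaux
namespace NCPaux

open Relation

variable {n : ℕ} {a d : Setoid (Fin n)}

lemma pow_rel_iff {p : ℕ} {π : Setoid (Fin n)} {x y : Fin (p*n)} {i j : Fin n}
    (hi : x.val/p = i.val) (hj : y.val/p = j.val) : powSetoid p π x y ↔ π i j := by
  rcases i with ⟨iv, hin⟩
  rcases j with ⟨jv, hjn⟩
  simp only at hi hj
  subst hi
  subst hj
  exact Iff.rfl

lemma ev_div (i : Fin n) : (ev i).val / 2 = i.val := by rw [ev_val]; omega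
lemma od_div (i : Fin n) : (od i).val / 2 = i.val := by rw [od_val]; omega

lemma pow2_inj {E F : Setoid (Fin n)} (h : powSetoid 2 E = powSetoid 2 F) : E = F := by
  apply Setoid.ext
  intro i j
  constructor
  · intro hij
    have h1 : powSetoid 2 E (ev i) (ev j) := (pow_rel_iff (ev_div i) (ev_div j)).mpr hij
    rw [h] at h1
    exact (pow_rel_iff (ev_div i) (ev_div j)).mp h1
  · intro hij
    have h1 : powSetoid 2 F (ev i) (ev j) := (pow_rel_iff (ev_div i) (ev_div j)).mpr hij
    rw [← h] at h1
    exact (pow_rel_iff (ev_div i) (ev_div j)).mp h1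

lemma interval_rel_iff {p : ℕ} {x y : Fin (p*n)} :
    intervalSetoid p n x y ↔ x.val/p = y.val/p := Iff.rfl

lemma shuffle_le_pow : shuffle2 a d ≤ powSetoid 2 (a ⊔ d) := by
  intro x y hxy
  rcases ev_or_od x with ⟨i, rfl⟩ | ⟨i, rfl⟩ <;> rcases ev_or_od y with ⟨j, rfl⟩ | ⟨j, rfl⟩
  · exact (pow_rel_iff (ev_div i) (ev_div j)).mpr
      (Setoid.le_def.mp le_sup_left (shuffle_ee.mp hxy))
  · exact absurd hxy shuffle_eo
  · exact absurd ((shuffle2 a d).symm' hxy) shuffle_eo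
  · exact (pow_rel_iff (od_div i) (od_div j)).mpr
      (Setoid.le_def.mp le_sup_right (shuffle_oo.mp hxy))

lemma interval_le_pow {E : Setoid (Fin n)} : intervalSetoid 2 n ≤ powSetoid 2 E := by
  intro x y hxy
  have h : x.val/2 = y.val/2 := hxy
  have hlt : y.val/2 < n := Nat.div_lt_of_lt_mul (by have := y.isLt; omega)
  exact (pow_rel_iff (i := ⟨y.val/2, hlt⟩) (j := ⟨y.val/2, hlt⟩) h rfl).mpr (E.refl' _)

lemma pow_le {ρ : Setoid (Fin (2*n))} (h1 : shuffle2 a d ≤ ρ) (h2 : intervalSetoid 2 n ≤ ρ) :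
    powSetoid 2 (a ⊔ d) ≤ ρ := by
  have key : ∀ u v : Fin n, Relation.EqvGen (fun s t => a s t ∨ d s t) u v →
      ∀ x y : Fin (2*n), x.val/2 = u.val → y.val/2 = v.val → ρ x y := by
    intro u v h
    induction h with
    | rel s t hst =>
      intro x y hx hy
      rcases hst with hst | hst
      · have r1 : ρ x (ev s) := h2 (show x.val/2 = (ev s).val/2 by rw [ev_div]; exact hx)
        have r2 : ρ (ev s) (ev t) := h1 (shuffle_ee.mpr hst)
        have r3 : ρ (ev t) y := h2 (show (ev t).val/2 = y.val/2 by rw [ev_div]; omega)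
        exact ρ.trans' r1 (ρ.trans' r2 r3)
      · have r1 : ρ x (od s) := h2 (show x.val/2 = (od s).val/2 by rw [od_div]; exact hx)
        have r2 : ρ (od s) (od t) := h1 (shuffle_oo.mpr hst)
        have r3 : ρ (od t) y := h2 (show (od t).val/2 = y.val/2 by rw [od_div]; omega)
        exact ρ.trans' r1 (ρ.trans' r2 r3)
    | refl s =>
      intro x y hx hy
      exact h2 (show x.val/2 = y.val/2 by omega)
    | symm s t _ ih =>
      intro x y hx hy
      exact ρ.symm' (ih y x hy hx)
    | trans s t w _ _ ih1 ih2 =>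
      intro x y hx hy
      exact ρ.trans' (ih1 x (ev t) hx (ev_div t)) (ih2 (ev t) y (ev_div t) hy)
  intro x y hxy
  have hx : x.val/2 < n := Nat.div_lt_of_lt_mul (by have := x.isLt; omega)
  have hy : y.val/2 < n := Nat.div_lt_of_lt_mul (by have := y.isLt; omega)
  have hrel : (a ⊔ d) (⟨x.val/2, hx⟩ : Fin n) ⟨y.val/2, hy⟩ :=
    (pow_rel_iff rfl rfl).mp hxy
  rw [Setoid.sup_eq_eqvGen] at hrel
  exact key _ _ hrel x y rfl rfl

lemma ncSup_shuffle (hσ : IsNoncrossing (shuffle2 a d)) :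
    ncSup (shuffle2 a d) (intervalSetoid 2 n) = powSetoid 2 (a ⊔ d) := by
  have hNC : IsNoncrossing (powSetoid 2 (a ⊔ d)) :=
    powSetoid_isNoncrossing 2 (⟨a ⊔ d, join_noncrossing hσ⟩ : NCP n)
  apply le_antisymm
  · exact sInf_le ⟨hNC, shuffle_le_pow, interval_le_pow⟩
  · exact le_sInf fun ρ hρ => pow_le hρ.2.1 hρ.2.2

theorem comp_eq {A B : NCP n} (h : Admissible2 A B) :
    comp A B = ⟨A.1 ⊔ B.1, join_noncrossing h⟩ := by
  show nroot 2 n (ncSup (shuffle2 A.1 B.1) (intervalSetoid 2 n)) = _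
  rw [ncSup_shuffle h]
  have hex : ∃ σ : NCP n, (npow 2 σ).1 = powSetoid 2 (A.1 ⊔ B.1) :=
    ⟨⟨A.1 ⊔ B.1, join_noncrossing h⟩, rfl⟩
  unfold nroot
  rw [dif_pos hex]
  exact Subtype.ext (pow2_inj hex.choose_spec)

end NCPaux
namespace NCPaux

open Relation

variable {n : ℕ} {a d : Setoid (Fin n)}

lemma nc2_of_key {b c : Fin n}
    (key : ∀ i j : Fin n, a i j → (b.val < i.val ∧ i.val ≤ c.val) →
      (b.val < j.val ∧ j.val ≤ c.val)) : NC2 a b c :=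
  fun i j hij => ⟨key i j hij, key j i (a.symm' hij)⟩

/-- Left absorption: a `d`-pair spanning the left cut of `(b,c]` can be pushed to start at `b`. -/
lemma absorb_left (hσ : IsNoncrossing (shuffle2 a d)) {b c : Fin n} (hbc : b.val < c.val)
    (hch : ReflTransGen (rel2 a d) b c) (hnc : NC2 a b c) :
    ∀ k : ℕ, ∀ p q : Fin n, b.val - p.val ≤ k → d p q → p.val ≤ b.val → b.val < q.val →
      q.val ≤ c.val → ∃ q' : Fin n, b.val < q'.val ∧ q'.val ≤ c.val ∧ d b q' := by
  intro k
  induction k with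
  | zero =>
    intro p q hk hpq hp hq1 hq2
    have : p = b := Fin.ext (by omega)
    exact ⟨q, hq1, hq2, this ▸ hpq⟩
  | succ k ih =>
    intro p q hk hpq hp hq1 hq2
    by_cases hpb : p.val = b.val
    · exact ⟨q, hq1, hq2, (Fin.ext hpb : p = b) ▸ hpq⟩
    · have hplt : p.val < b.val := by omega
      obtain ⟨x, y, hxA, hyA, rxy, -⟩ := first_exit hch
        (fun z => p.val < z.val ∧ z.val ≤ b.val) ⟨hplt, le_refl _⟩ (by omega)
      rcases rxy with hxy | hxy
      · -- a-step leaving (p, b] : always a forbidden crossing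
        exfalso
        rcases (by omega : y.val ≤ p.val ∨ (b.val < y.val ∧ y.val ≤ c.val) ∨ c.val < y.val)
          with hy | hy | hy
        · exact F1 hσ (a.symm' hxy) hpq hy hxA.1 (by omega)
        · exact absurd ((hnc x y hxy).mpr hy) (by omega)
        · exact F2 hσ hxy hpq hxA.1 (by omega) (by omega)
      · rcases (by omega : y.val ≤ p.val ∨ (b.val < y.val ∧ y.val ≤ q.val) ∨ q.val < y.val)
          with hy | hy | hy
        · -- merge with the pair (p,q) from the left
          have hyp : d y p := by
            rcases eq_or_lt_of_le hy with he | hlt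
            · exact (Fin.ext he : y = p) ▸ d.refl' y
            · exact F3 hσ (d.symm' hxy) hpq hlt (le_of_lt hxA.1) (by omega)
          have hxq : d x q := d.trans' (d.trans' hxy hyp) hpq
          exact ih x q (by omega) hxq hxA.2 hq1 hq2
        · -- nested pair (x, y) inside (p, q]
          exact ih x y (by omega) hxy hxA.2 hy.1 (by omega)
        · -- interleaved: merge p ~ x
          have hpx : d p x := F3 hσ hpq hxy (by omega) (by omega) hy
          exact ih x q (by omega) (d.trans' (d.symm' hpx) hpq) hxA.2 hq1 hq2

/-- Key step: relative complements are determined — the hard direction. -/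
lemma main_lemma (hσ : IsNoncrossing (shuffle2 a d)) :
    ∀ m : ℕ, ∀ b c : Fin n, (n - b.val) * (n+1) + (c.val - b.val) ≤ m →
      b.val < c.val → (a ⊔ d) b c → NC2 a b c → d b c := by
  intro m
  induction m using Nat.strong_induction_on with
  | _ m IH =>
  intro b c hm hbc hE hnc
  have hbn := b.isLt
  have hcn := c.isLt
  have hchbc : ReflTransGen (rel2 a d) b c := sup_rel_iff.mp hE
  have hchcb : ReflTransGen (rel2 a d) c b := sup_rel_iff.mp (Setoid.symm' _ hE)
  -- finishing move once we have d b q' with b < q' ≤ c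
  have finishL : ∀ q' : Fin n, b.val < q'.val → q'.val ≤ c.val → d b q' → d b c := by
    intro q' h1 h2 hdbq'
    rcases eq_or_lt_of_le h2 with he | hlt
    · exact (Fin.ext he : q' = c) ▸ hdbq'
    · have hnc' : NC2 a q' c := by
        apply nc2_of_key
        intro i j hij ⟨hi1, hi2⟩
        by_contra hj
        rcases (by omega : j.val ≤ b.val ∨ (b.val < j.val ∧ j.val ≤ q'.val) ∨ c.val < j.val)
          with hy | hy | hy
        · exact absurd ((hnc i j hij).mp ⟨by omega, hi2⟩) (by omega)
        · exact F2 hσ (a.symm' hij) hdbq' hy.1 hy.2 hi1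
        · exact absurd ((hnc i j hij).mp ⟨by omega, hi2⟩) (by omega)
      have hE' : (a ⊔ d) q' c :=
        Setoid.trans' _ (Setoid.symm' _ (Setoid.le_def.mp le_sup_right hdbq')) hE
      have := IH ((n - q'.val) * (n+1) + (c.val - q'.val)) (by
        have : b.val < q'.val := h1
        calc (n - q'.val) * (n+1) + (c.val - q'.val)
            < (n - b.val) * (n+1) + (c.val - b.val) := by
              have h3 : n - q'.val < n - b.val := by omega
              have h4 : c.val - q'.val ≤ n := by omega
              have h5 : c.val - b.val ≤ n := by omega
              nlinarith [Nat.sub_le n b.val]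
          _ ≤ m := hm) q' c (le_refl _) hlt hE' hnc'
      exact d.trans' hdbq' this
  obtain ⟨u, w, hu, hw, ruw, hpre⟩ := first_exit hchcb
    (fun z => b.val < z.val ∧ z.val ≤ c.val) ⟨hbc, le_refl _⟩ (by omega)
  rcases ruw with huw | huw
  · exact absurd ((hnc u w huw).mp hu) (by omega)
  · by_cases hwb : w.val ≤ b.val
    · obtain ⟨q', h1, h2, h3⟩ := absorb_left hσ hbc hchbc hnc n w u (by omega)
        (d.symm' huw) hwb hu.1 hu.2
      exact finishL q' h1 h2 h3
    · have hwc : c.val < w.val := by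
        rcases (by exact hw : ¬ (b.val < w.val ∧ w.val ≤ c.val)) with hw'
        omega
      have measure_lt : ∀ bv cv : ℕ, b.val < bv → cv < n →
          (n - bv) * (n+1) + (cv - bv) < m := by
        intro bv cv h1 h2
        have hstep : (n - bv) * (n+1) + (cv - bv) <
            (n - b.val) * (n+1) + (c.val - b.val) := by
          have e1 : n - bv + 1 ≤ n - b.val := by omega
          calc (n - bv) * (n+1) + (cv - bv) < (n - bv) * (n+1) + (n+1) := by omega
            _ = (n - bv + 1) * (n+1) := by ring
            _ ≤ (n - b.val) * (n+1) := Nat.mul_le_mul_right _ e1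
            _ ≤ _ := Nat.le_add_right _ _
        omega
      by_cases huc : u.val = c.val
      · -- u = c : extension loop along growing d-class of c
        have hdcw : d c w := (Fin.ext huc : u = c) ▸ huw
        have EXT : ∀ k : ℕ, ∀ w' : Fin n, n - w'.val ≤ k → c.val < w'.val → d c w' →
            d b c := by
          intro k
          induction k with
          | zero => intro w' hk hcw' _; exact absurd w'.isLt (by omega)
          | succ k ihE =>
            intro w' hk hcw' hdcw'
            have hw'n := w'.isLt
            obtain ⟨x, y, hx, hy, rxy, hpre2⟩ := first_exit hchcb
              (fun z => b.val < z.val ∧ z.val ≤ w'.val) ⟨by omega, by omega⟩ (by omega)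
            have hy' : y.val ≤ b.val ∨ w'.val < y.val := by
              rcases (by exact hy : ¬ (b.val < y.val ∧ y.val ≤ w'.val)) with h
              omega
            rcases rxy with hxy | hxy
            · -- a-step: forbidden
              exfalso
              by_cases hxc : x.val ≤ c.val
              · rcases hy' with hyy | hyy
                · exact absurd ((hnc x y hxy).mp ⟨hx.1, hxc⟩) (by omega)
                · exact absurd ((hnc x y hxy).mp ⟨hx.1, hxc⟩) (by omega)
              · rcases hy' with hyy | hyy
                · exact F1 hσ (a.symm' hxy) hdcw' (by omega) (by omega) hx.2
                · exact F2 hσ hxy hdcw' (by omega) hx.2 hyy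
            · rcases hy' with hyy | hyy
              · -- y ≤ b
                by_cases hxc : x.val ≤ c.val
                · obtain ⟨q', h1, h2, h3⟩ := absorb_left hσ hbc hchbc hnc n y x (by omega)
                    (d.symm' hxy) hyy hx.1 hxc
                  exact finishL q' h1 h2 h3
                · have hdyc : d y c := by
                    rcases (by omega : x.val < w'.val ∨ x.val = w'.val) with hxw | hxw
                    · exact F3 hσ (d.symm' hxy) hdcw' (by omega) (by omega) hxw
                    · exact d.trans' (d.symm' hxy) ((Fin.ext hxw : x = w') ▸ (d.symm' hdcw'))
                  obtain ⟨q', h1, h2, h3⟩ := absorb_left hσ hbc hchbc hnc n y c (by omega)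
                    hdyc hyy hbc (le_refl _)
                  exact finishL q' h1 h2 h3
              · -- y > w'
                by_cases hxc : x.val ≤ c.val
                · rcases (by omega : x.val < c.val ∨ x.val = c.val) with hxlt | hxeq
                  · have hnc_bx : NC2 a b x := nc2_of_key (fun i j hij hi => by
                      by_contra hj
                      rcases (by omega : j.val ≤ b.val ∨ (x.val < j.val ∧ j.val ≤ c.val) ∨
                        c.val < j.val) with hjj | hjj | hjj
                      · exact absurd ((hnc i j hij).mp ⟨hi.1, by omega⟩) (by omega)
                      · exact F1 hσ hij hxy (by omega) (by omega) (by omega)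
                      · exact absurd ((hnc i j hij).mp ⟨hi.1, by omega⟩) (by omega))
                    have hEbx : (a ⊔ d) b x := Setoid.trans' _ hE (sup_rel_iff.mpr hpre2)
                    have hdbx : d b x := IH ((n - b.val) * (n+1) + (x.val - b.val))
                      (by omega) b x (le_refl _) hx.1 hEbx hnc_bx
                    have hdby : d b y := d.trans' hdbx hxy
                    have hnc_cy : NC2 a c y := nc2_of_key (fun i j hij hi => by
                      by_contra hj
                      rcases (by omega : j.val ≤ b.val ∨ (b.val < j.val ∧ j.val ≤ c.val) ∨
                        y.val < j.val) with hjj | hjj | hjj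
                      · exact F1 hσ (a.symm' hij) hdby hjj (by omega) hi.2
                      · exact absurd ((hnc j i (a.symm' hij)).mp ⟨hjj.1, hjj.2⟩) (by omega)
                      · exact F2 hσ hij hdby (by omega) hi.2 hjj)
                    have hEcy : (a ⊔ d) c y :=
                      Setoid.trans' _ (Setoid.symm' _ hE) (Setoid.le_def.mp le_sup_right hdby)
                    have hdcy : d c y := IH ((n - c.val) * (n+1) + (y.val - c.val))
                      (measure_lt c.val y.val hbc y.isLt) c y (le_refl _) (by omega) hEcy hnc_cy
                    exact d.trans' hdby (d.symm' hdcy)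
                  · have hdcy : d c y := (Fin.ext hxeq : x = c) ▸ hxy
                    exact ihE y (by omega) (by omega) hdcy
                · have hdcy : d c y := by
                    rcases (by omega : x.val < w'.val ∨ x.val = w'.val) with hxw | hxw
                    · exact d.trans' (F3 hσ hdcw' hxy (by omega) hx.2 hyy) hxy
                    · exact d.trans' hdcw' ((Fin.ext hxw : x = w') ▸ hxy)
                  exact ihE y (by omega) (by omega) hdcy
        exact EXT n w (by omega) hwc hdcw
      · -- b < u < c
        have hulc : u.val < c.val := by omega
        have hnc_bu : NC2 a b u := nc2_of_key (fun i j hij hi => by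
          by_contra hj
          rcases (by omega : j.val ≤ b.val ∨ (u.val < j.val ∧ j.val ≤ c.val) ∨
            c.val < j.val) with hjj | hjj | hjj
          · exact absurd ((hnc i j hij).mp ⟨hi.1, by omega⟩) (by omega)
          · exact F1 hσ hij huw (by omega) (by omega) (by omega)
          · exact absurd ((hnc i j hij).mp ⟨hi.1, by omega⟩) (by omega))
        have hEbu : (a ⊔ d) b u := Setoid.trans' _ hE (sup_rel_iff.mpr hpre)
        have hdbu : d b u := IH ((n - b.val) * (n+1) + (u.val - b.val))
          (by omega) b u (le_refl _) hu.1 hEbu hnc_bu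
        have hdbw : d b w := d.trans' hdbu huw
        have hnc_cw : NC2 a c w := nc2_of_key (fun i j hij hi => by
          by_contra hj
          rcases (by omega : j.val ≤ b.val ∨ (b.val < j.val ∧ j.val ≤ c.val) ∨
            w.val < j.val) with hjj | hjj | hjj
          · exact F1 hσ (a.symm' hij) hdbw hjj (by omega) hi.2
          · exact absurd ((hnc j i (a.symm' hij)).mp ⟨hjj.1, hjj.2⟩) (by omega)
          · exact F2 hσ hij hdbw (by omega) hi.2 hjj)
        have hEcw : (a ⊔ d) c w :=
          Setoid.trans' _ (Setoid.symm' _ hE) (Setoid.le_def.mp le_sup_right hdbw)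
        have hdcw : d c w := IH ((n - c.val) * (n+1) + (w.val - c.val))
          (measure_lt c.val w.val hbc w.isLt) c w (le_refl _) hwc hEcw hnc_cw
        exact d.trans' hdbw (d.symm' hdcw)

end NCPaux
namespace NCPaux

open Relation

variable {n : ℕ}

theorem complement_unique {A D1 D2 : NCP n} (h1 : Admissible2 A D1) (h2 : Admissible2 A D2)
    (he : comp A D1 = comp A D2) : D1 = D2 := by
  have hj : A.1 ⊔ D1.1 = A.1 ⊔ D2.1 :=
    congrArg Subtype.val ((comp_eq h1).symm.trans (he.trans (comp_eq h2)))
  have key : ∀ (D E : NCP n), Admissible2 A D → Admissible2 A E →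
      A.1 ⊔ D.1 = A.1 ⊔ E.1 → ∀ i j : Fin n, D.1 i j → E.1 i j := by
    intro D E hD hE hDE i j hij
    have main : ∀ p q : Fin n, p.val < q.val → D.1 p q → E.1 p q := by
      intro p q hlt hpq
      have hEpq : (A.1 ⊔ E.1) p q := by
        rw [← hDE]
        exact Setoid.le_def.mp le_sup_right hpq
      exact main_lemma hE ((n - p.val) * (n+1) + (q.val - p.val)) p q (le_refl _) hlt hEpq
        (nc2_of_pair hD hpq hlt)
    rcases lt_trichotomy i.val j.val with hlt | heq | hlt
    · exact main i j hlt hij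
    · exact (Fin.ext heq : i = j) ▸ E.1.refl' i
    · exact E.1.symm' (main j i hlt (D.1.symm' hij))
  exact Subtype.ext (Setoid.ext fun i j => ⟨key D1 D2 h1 h2 hj i j, key D2 D1 h2 h1 hj.symm i j⟩)

/-- evaluation of `relKreweras` given an admissible witness -/
theorem relKreweras_eval {B A G : NCP n} (hadm : Admissible2 A G) (hcomp : comp A G = B) :
    relKreweras B A = G := by
  have hex : ∃ γ : NCP n, Admissible2 A γ ∧ comp A γ = B := ⟨G, hadm, hcomp⟩
  unfold relKreweras
  rw [dif_pos hex]
  exact complement_unique hex.choose_spec.1 hadm (hex.choose_spec.2.trans hcomp.symm)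

end NCPaux
namespace NCPaux

open Relation

variable {n : ℕ}

lemma eqShuffle_rel {F : Fin 3 → Setoid (Fin n)} {x y : Fin (3*n)} :
    eqShuffle n 3 F x y ↔ ∃ i : Fin 3, ((x:ℕ) % 3 = (i:ℕ)) ∧ ((y:ℕ) % 3 = (i:ℕ)) ∧
      F i ⟨(x:ℕ)/3, Nat.div_lt_of_lt_mul x.isLt⟩ ⟨(y:ℕ)/3, Nat.div_lt_of_lt_mul y.isLt⟩ :=
  Iff.rfl

/-- position of the `i`-th copy with residue `r` in the triple shuffle -/
def t3 (r : Fin 3) (i : Fin n) : Fin (3*n) :=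
  ⟨3*i.val + r.val, by have := i.isLt; have := r.isLt; omega⟩

@[simp] lemma t3_val (r : Fin 3) (i : Fin n) : (t3 r i).val = 3*i.val + r.val := rfl

lemma t3_div (r : Fin 3) (i : Fin n) : ((t3 r i) : ℕ)/3 = i.val := by
  have := r.isLt
  show (3*i.val + r.val)/3 = i.val
  omega

lemma t3_mod (r : Fin 3) (i : Fin n) : ((t3 r i) : ℕ) % 3 = r.val := by
  have := r.isLt
  show (3*i.val + r.val) % 3 = r.val
  omega

lemma tri_rel {F : Fin 3 → Setoid (Fin n)} (r : Fin 3) (i j : Fin n) :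
    eqShuffle n 3 F (t3 r i) (t3 r j) ↔ F r i j := by
  rw [eqShuffle_rel]
  have e1 : (⟨((t3 r i) : ℕ)/3, Nat.div_lt_of_lt_mul (t3 r i).isLt⟩ : Fin n) = i :=
    Fin.ext (t3_div r i)
  have e2 : (⟨((t3 r j) : ℕ)/3, Nat.div_lt_of_lt_mul (t3 r j).isLt⟩ : Fin n) = j :=
    Fin.ext (t3_div r j)
  constructor
  · rintro ⟨i0, h1, h2, h3⟩
    have hr : i0 = r := Fin.ext (by rw [← h1, t3_mod])
    subst hr
    rwa [e1, e2] at h3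
  · intro hf
    refine ⟨r, t3_mod r i, t3_mod r j, ?_⟩
    rw [e1, e2]
    exact hf

lemma tri_ne {F : Fin 3 → Setoid (Fin n)} {r s : Fin 3} (hrs : r ≠ s) {i j : Fin n}
    (h : eqShuffle n 3 F (t3 r i) (t3 s j)) : False := by
  rw [eqShuffle_rel] at h
  obtain ⟨i0, h1, h2, -⟩ := h
  rw [t3_mod] at h1 h2
  exact hrs (Fin.ext (h1.trans h2.symm))

section Triple

variable {A B C : NCP n}

lemma adm_AB (h : AdmissibleTuple n 3 ![A, B, C]) : Admissible2 A B := by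
  intro w x y z h1 h2 h3 hac hbd
  have h1 := Fin.lt_def.mp h1
  have h2 := Fin.lt_def.mp h2
  have h3 := Fin.lt_def.mp h3
  rcases ev_or_od w with ⟨i, rfl⟩|⟨i, rfl⟩ <;> rcases ev_or_od x with ⟨j, rfl⟩|⟨j, rfl⟩ <;>
    rcases ev_or_od y with ⟨k, rfl⟩|⟨k, rfl⟩ <;> rcases ev_or_od z with ⟨l, rfl⟩|⟨l, rfl⟩ <;>
    simp only [ev_val, od_val] at h1 h2 h3 <;>
    first
    | exact absurd hac shuffle_eo
    | exact absurd ((shuffle2 A.1 B.1).symm' hac) shuffle_eo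
    | exact absurd hbd shuffle_eo
    | exact absurd ((shuffle2 A.1 B.1).symm' hbd) shuffle_eo
    | (exact shuffle_ee.mpr ((tri_rel (0 : Fin 3) i j).mp
        (h (t3 0 i) (t3 0 j) (t3 0 k) (t3 0 l)
          (Fin.lt_def.mpr (by simp; omega)) (Fin.lt_def.mpr (by simp; omega))
          (Fin.lt_def.mpr (by simp; omega))
          ((tri_rel (0 : Fin 3) i k).mpr (shuffle_ee.mp hac))
          ((tri_rel (0 : Fin 3) j l).mpr (shuffle_ee.mp hbd)))))
    | (exact absurd (h (t3 0 i) (t3 1 j) (t3 0 k) (t3 1 l)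
          (Fin.lt_def.mpr (by simp; omega)) (Fin.lt_def.mpr (by simp; omega))
          (Fin.lt_def.mpr (by simp; omega))
          ((tri_rel (0 : Fin 3) i k).mpr (shuffle_ee.mp hac))
          ((tri_rel (1 : Fin 3) j l).mpr (shuffle_oo.mp hbd)))
        (fun hx => tri_ne (by decide) hx))
    | (exact absurd (h (t3 1 i) (t3 0 j) (t3 1 k) (t3 0 l)
          (Fin.lt_def.mpr (by simp; omega)) (Fin.lt_def.mpr (by simp; omega))
          (Fin.lt_def.mpr (by simp; omega))
          ((tri_rel (1 : Fin 3) i k).mpr (shuffle_oo.mp hac))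
          ((tri_rel (0 : Fin 3) j l).mpr (shuffle_ee.mp hbd)))
        (fun hx => tri_ne (by decide) hx))
    | (exact shuffle_oo.mpr ((tri_rel (1 : Fin 3) i j).mp
        (h (t3 1 i) (t3 1 j) (t3 1 k) (t3 1 l)
          (Fin.lt_def.mpr (by simp; omega)) (Fin.lt_def.mpr (by simp; omega))
          (Fin.lt_def.mpr (by simp; omega))
          ((tri_rel (1 : Fin 3) i k).mpr (shuffle_oo.mp hac))
          ((tri_rel (1 : Fin 3) j l).mpr (shuffle_oo.mp hbd)))))

lemma adm_BC (h : AdmissibleTuple n 3 ![A, B, C]) : Admissible2 B C := by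
  intro w x y z h1 h2 h3 hac hbd
  have h1 := Fin.lt_def.mp h1
  have h2 := Fin.lt_def.mp h2
  have h3 := Fin.lt_def.mp h3
  rcases ev_or_od w with ⟨i, rfl⟩|⟨i, rfl⟩ <;> rcases ev_or_od x with ⟨j, rfl⟩|⟨j, rfl⟩ <;>
    rcases ev_or_od y with ⟨k, rfl⟩|⟨k, rfl⟩ <;> rcases ev_or_od z with ⟨l, rfl⟩|⟨l, rfl⟩ <;>
    simp only [ev_val, od_val] at h1 h2 h3 <;>
    first
    | exact absurd hac shuffle_eo
    | exact absurd ((shuffle2 B.1 C.1).symm' hac) shuffle_eo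
    | exact absurd hbd shuffle_eo
    | exact absurd ((shuffle2 B.1 C.1).symm' hbd) shuffle_eo
    | (exact shuffle_ee.mpr ((tri_rel (1 : Fin 3) i j).mp
        (h (t3 1 i) (t3 1 j) (t3 1 k) (t3 1 l)
          (Fin.lt_def.mpr (by simp; omega)) (Fin.lt_def.mpr (by simp; omega))
          (Fin.lt_def.mpr (by simp; omega))
          ((tri_rel (1 : Fin 3) i k).mpr (shuffle_ee.mp hac))
          ((tri_rel (1 : Fin 3) j l).mpr (shuffle_ee.mp hbd)))))
    | (exact absurd (h (t3 1 i) (t3 2 j) (t3 1 k) (t3 2 l)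
          (Fin.lt_def.mpr (by simp; omega)) (Fin.lt_def.mpr (by simp; omega))
          (Fin.lt_def.mpr (by simp; omega))
          ((tri_rel (1 : Fin 3) i k).mpr (shuffle_ee.mp hac))
          ((tri_rel (2 : Fin 3) j l).mpr (shuffle_oo.mp hbd)))
        (fun hx => tri_ne (by decide) hx))
    | (exact absurd (h (t3 2 i) (t3 1 j) (t3 2 k) (t3 1 l)
          (Fin.lt_def.mpr (by simp; omega)) (Fin.lt_def.mpr (by simp; omega))
          (Fin.lt_def.mpr (by simp; omega))
          ((tri_rel (2 : Fin 3) i k).mpr (shuffle_oo.mp hac))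
          ((tri_rel (1 : Fin 3) j l).mpr (shuffle_ee.mp hbd)))
        (fun hx => tri_ne (by decide) hx))
    | (exact shuffle_oo.mpr ((tri_rel (2 : Fin 3) i j).mp
        (h (t3 2 i) (t3 2 j) (t3 2 k) (t3 2 l)
          (Fin.lt_def.mpr (by simp; omega)) (Fin.lt_def.mpr (by simp; omega))
          (Fin.lt_def.mpr (by simp; omega))
          ((tri_rel (2 : Fin 3) i k).mpr (shuffle_oo.mp hac))
          ((tri_rel (2 : Fin 3) j l).mpr (shuffle_oo.mp hbd)))))

end Triple

end NCPaux
namespace NCPaux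

open Relation

variable {n : ℕ}

section Triple

variable {A B C : NCP n}

/-- an `(A ⊔ B)`-pair interleaved even-odd with a `C`-pair is impossible -/
lemma cross_EC (h : AdmissibleTuple n 3 ![A, B, C]) {i j k l : Fin n}
    (hE : (A.1 ⊔ B.1) i k) (hC : C.1 j l)
    (h1 : i.val ≤ j.val) (h2 : j.val < k.val) (h3 : k.val ≤ l.val) : False := by
  have hch : ReflTransGen (rel2 A.1 B.1) k i :=
    (haveI : Std.Symm (rel2 A.1 B.1) := ⟨fun _ _ h => rel2_symm h⟩; ReflTransGen.symmetric.symm _ _ (sup_rel_iff.mp hE))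
  obtain ⟨x, y, hx, hy, rxy, -⟩ := first_exit hch
    (fun z => j.val < z.val ∧ z.val ≤ l.val) ⟨h2, h3⟩ (by omega)
  have hy' : y.val ≤ j.val ∨ l.val < y.val := by
    rcases (by exact hy : ¬ (j.val < y.val ∧ y.val ≤ l.val)) with h'
    omega
  rcases rxy with hr | hr <;> rcases hy' with hyy | hyy
  · exact tri_ne (show (0 : Fin 3) ≠ 2 by decide)
      (h (t3 0 y) (t3 2 j) (t3 0 x) (t3 2 l)
        (Fin.lt_def.mpr (by simp; omega)) (Fin.lt_def.mpr (by simp; omega))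
        (Fin.lt_def.mpr (by simp; omega))
        ((tri_rel (0 : Fin 3) y x).mpr (A.1.symm' hr))
        ((tri_rel (2 : Fin 3) j l).mpr hC))
  · exact tri_ne (show (2 : Fin 3) ≠ 0 by decide)
      (h (t3 2 j) (t3 0 x) (t3 2 l) (t3 0 y)
        (Fin.lt_def.mpr (by simp; omega)) (Fin.lt_def.mpr (by simp; omega))
        (Fin.lt_def.mpr (by simp; omega))
        ((tri_rel (2 : Fin 3) j l).mpr hC)
        ((tri_rel (0 : Fin 3) x y).mpr hr))
  · exact tri_ne (show (1 : Fin 3) ≠ 2 by decide)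
      (h (t3 1 y) (t3 2 j) (t3 1 x) (t3 2 l)
        (Fin.lt_def.mpr (by simp; omega)) (Fin.lt_def.mpr (by simp; omega))
        (Fin.lt_def.mpr (by simp; omega))
        ((tri_rel (1 : Fin 3) y x).mpr (B.1.symm' hr))
        ((tri_rel (2 : Fin 3) j l).mpr hC))
  · exact tri_ne (show (2 : Fin 3) ≠ 1 by decide)
      (h (t3 2 j) (t3 1 x) (t3 2 l) (t3 1 y)
        (Fin.lt_def.mpr (by simp; omega)) (Fin.lt_def.mpr (by simp; omega))
        (Fin.lt_def.mpr (by simp; omega))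
        ((tri_rel (2 : Fin 3) j l).mpr hC)
        ((tri_rel (1 : Fin 3) x y).mpr hr))

lemma cross_CE (h : AdmissibleTuple n 3 ![A, B, C]) {i j k l : Fin n}
    (hC : C.1 i k) (hE : (A.1 ⊔ B.1) j l)
    (h1 : i.val < j.val) (h2 : j.val ≤ k.val) (h3 : k.val < l.val) : False := by
  have hch : ReflTransGen (rel2 A.1 B.1) j l := sup_rel_iff.mp hE
  obtain ⟨x, y, hx, hy, rxy, -⟩ := first_exit hch
    (fun z => i.val < z.val ∧ z.val ≤ k.val) ⟨h1, h2⟩ (by omega)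
  have hy' : y.val ≤ i.val ∨ k.val < y.val := by
    rcases (by exact hy : ¬ (i.val < y.val ∧ y.val ≤ k.val)) with h'
    omega
  rcases rxy with hr | hr <;> rcases hy' with hyy | hyy
  · exact tri_ne (show (0 : Fin 3) ≠ 2 by decide)
      (h (t3 0 y) (t3 2 i) (t3 0 x) (t3 2 k)
        (Fin.lt_def.mpr (by simp; omega)) (Fin.lt_def.mpr (by simp; omega))
        (Fin.lt_def.mpr (by simp; omega))
        ((tri_rel (0 : Fin 3) y x).mpr (A.1.symm' hr))
        ((tri_rel (2 : Fin 3) i k).mpr hC))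
  · exact tri_ne (show (2 : Fin 3) ≠ 0 by decide)
      (h (t3 2 i) (t3 0 x) (t3 2 k) (t3 0 y)
        (Fin.lt_def.mpr (by simp; omega)) (Fin.lt_def.mpr (by simp; omega))
        (Fin.lt_def.mpr (by simp; omega))
        ((tri_rel (2 : Fin 3) i k).mpr hC)
        ((tri_rel (0 : Fin 3) x y).mpr hr))
  · exact tri_ne (show (1 : Fin 3) ≠ 2 by decide)
      (h (t3 1 y) (t3 2 i) (t3 1 x) (t3 2 k)
        (Fin.lt_def.mpr (by simp; omega)) (Fin.lt_def.mpr (by simp; omega))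
        (Fin.lt_def.mpr (by simp; omega))
        ((tri_rel (1 : Fin 3) y x).mpr (B.1.symm' hr))
        ((tri_rel (2 : Fin 3) i k).mpr hC))
  · exact tri_ne (show (2 : Fin 3) ≠ 1 by decide)
      (h (t3 2 i) (t3 1 x) (t3 2 k) (t3 1 y)
        (Fin.lt_def.mpr (by simp; omega)) (Fin.lt_def.mpr (by simp; omega))
        (Fin.lt_def.mpr (by simp; omega))
        ((tri_rel (2 : Fin 3) i k).mpr hC)
        ((tri_rel (1 : Fin 3) x y).mpr hr))

lemma cross_AF (h : AdmissibleTuple n 3 ![A, B, C]) {i j k l : Fin n}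
    (hA : A.1 i k) (hF : (B.1 ⊔ C.1) j l)
    (h1 : i.val ≤ j.val) (h2 : j.val < k.val) (h3 : k.val ≤ l.val) : False := by
  have hch : ReflTransGen (rel2 B.1 C.1) j l := sup_rel_iff.mp hF
  obtain ⟨x, y, hx, hy, rxy, -⟩ := first_exit hch
    (fun z => i.val ≤ z.val ∧ z.val < k.val) ⟨h1, h2⟩ (by omega)
  have hy' : y.val < i.val ∨ k.val ≤ y.val := by
    rcases (by exact hy : ¬ (i.val ≤ y.val ∧ y.val < k.val)) with h'
    omega
  rcases rxy with hr | hr <;> rcases hy' with hyy | hyy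
  · exact tri_ne (show (1 : Fin 3) ≠ 0 by decide)
      (h (t3 1 y) (t3 0 i) (t3 1 x) (t3 0 k)
        (Fin.lt_def.mpr (by simp; omega)) (Fin.lt_def.mpr (by simp; omega))
        (Fin.lt_def.mpr (by simp; omega))
        ((tri_rel (1 : Fin 3) y x).mpr (B.1.symm' hr))
        ((tri_rel (0 : Fin 3) i k).mpr hA))
  · exact tri_ne (show (0 : Fin 3) ≠ 1 by decide)
      (h (t3 0 i) (t3 1 x) (t3 0 k) (t3 1 y)
        (Fin.lt_def.mpr (by simp; omega)) (Fin.lt_def.mpr (by simp; omega))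
        (Fin.lt_def.mpr (by simp; omega))
        ((tri_rel (0 : Fin 3) i k).mpr hA)
        ((tri_rel (1 : Fin 3) x y).mpr hr))
  · exact tri_ne (show (2 : Fin 3) ≠ 0 by decide)
      (h (t3 2 y) (t3 0 i) (t3 2 x) (t3 0 k)
        (Fin.lt_def.mpr (by simp; omega)) (Fin.lt_def.mpr (by simp; omega))
        (Fin.lt_def.mpr (by simp; omega))
        ((tri_rel (2 : Fin 3) y x).mpr (C.1.symm' hr))
        ((tri_rel (0 : Fin 3) i k).mpr hA))
  · exact tri_ne (show (0 : Fin 3) ≠ 2 by decide)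
      (h (t3 0 i) (t3 2 x) (t3 0 k) (t3 2 y)
        (Fin.lt_def.mpr (by simp; omega)) (Fin.lt_def.mpr (by simp; omega))
        (Fin.lt_def.mpr (by simp; omega))
        ((tri_rel (0 : Fin 3) i k).mpr hA)
        ((tri_rel (2 : Fin 3) x y).mpr hr))

lemma cross_FA (h : AdmissibleTuple n 3 ![A, B, C]) {i j k l : Fin n}
    (hF : (B.1 ⊔ C.1) i k) (hA : A.1 j l)
    (h1 : i.val < j.val) (h2 : j.val ≤ k.val) (h3 : k.val < l.val) : False := by
  have hch : ReflTransGen (rel2 B.1 C.1) k i :=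
    (haveI : Std.Symm (rel2 B.1 C.1) := ⟨fun _ _ h => rel2_symm h⟩; ReflTransGen.symmetric.symm _ _ (sup_rel_iff.mp hF))
  obtain ⟨x, y, hx, hy, rxy, -⟩ := first_exit hch
    (fun z => j.val ≤ z.val ∧ z.val < l.val) ⟨h2, h3⟩ (by omega)
  have hy' : y.val < j.val ∨ l.val ≤ y.val := by
    rcases (by exact hy : ¬ (j.val ≤ y.val ∧ y.val < l.val)) with h'
    omega
  rcases rxy with hr | hr <;> rcases hy' with hyy | hyy
  · exact tri_ne (show (1 : Fin 3) ≠ 0 by decide)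
      (h (t3 1 y) (t3 0 j) (t3 1 x) (t3 0 l)
        (Fin.lt_def.mpr (by simp; omega)) (Fin.lt_def.mpr (by simp; omega))
        (Fin.lt_def.mpr (by simp; omega))
        ((tri_rel (1 : Fin 3) y x).mpr (B.1.symm' hr))
        ((tri_rel (0 : Fin 3) j l).mpr hA))
  · exact tri_ne (show (0 : Fin 3) ≠ 1 by decide)
      (h (t3 0 j) (t3 1 x) (t3 0 l) (t3 1 y)
        (Fin.lt_def.mpr (by simp; omega)) (Fin.lt_def.mpr (by simp; omega))
        (Fin.lt_def.mpr (by simp; omega))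
        ((tri_rel (0 : Fin 3) j l).mpr hA)
        ((tri_rel (1 : Fin 3) x y).mpr hr))
  · exact tri_ne (show (2 : Fin 3) ≠ 0 by decide)
      (h (t3 2 y) (t3 0 j) (t3 2 x) (t3 0 l)
        (Fin.lt_def.mpr (by simp; omega)) (Fin.lt_def.mpr (by simp; omega))
        (Fin.lt_def.mpr (by simp; omega))
        ((tri_rel (2 : Fin 3) y x).mpr (C.1.symm' hr))
        ((tri_rel (0 : Fin 3) j l).mpr hA))
  · exact tri_ne (show (0 : Fin 3) ≠ 2 by decide)
      (h (t3 0 j) (t3 2 x) (t3 0 l) (t3 2 y)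
        (Fin.lt_def.mpr (by simp; omega)) (Fin.lt_def.mpr (by simp; omega))
        (Fin.lt_def.mpr (by simp; omega))
        ((tri_rel (0 : Fin 3) j l).mpr hA)
        ((tri_rel (2 : Fin 3) x y).mpr hr))

lemma adm_join_left (h : AdmissibleTuple n 3 ![A, B, C]) :
    IsNoncrossing (shuffle2 (A.1 ⊔ B.1) C.1) := by
  have hE : IsNoncrossing ((A.1 ⊔ B.1 : Setoid (Fin n))) := join_noncrossing (adm_AB h)
  intro w x y z h1 h2 h3 hac hbd
  have h1 := Fin.lt_def.mp h1
  have h2 := Fin.lt_def.mp h2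
  have h3 := Fin.lt_def.mp h3
  rcases ev_or_od w with ⟨i, rfl⟩|⟨i, rfl⟩ <;> rcases ev_or_od x with ⟨j, rfl⟩|⟨j, rfl⟩ <;>
    rcases ev_or_od y with ⟨k, rfl⟩|⟨k, rfl⟩ <;> rcases ev_or_od z with ⟨l, rfl⟩|⟨l, rfl⟩ <;>
    simp only [ev_val, od_val] at h1 h2 h3 <;>
    first
    | exact absurd hac shuffle_eo
    | exact absurd ((shuffle2 (A.1 ⊔ B.1) C.1).symm' hac) shuffle_eo
    | exact absurd hbd shuffle_eo
    | exact absurd ((shuffle2 (A.1 ⊔ B.1) C.1).symm' hbd) shuffle_eo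
    | exact shuffle_ee.mpr (hE i j k l (Fin.lt_def.mpr (by omega)) (Fin.lt_def.mpr (by omega))
        (Fin.lt_def.mpr (by omega)) (shuffle_ee.mp hac) (shuffle_ee.mp hbd))
    | exact absurd (cross_EC h (shuffle_ee.mp hac) (shuffle_oo.mp hbd)
        (by omega) (by omega) (by omega)) id
    | exact absurd (cross_CE h (shuffle_oo.mp hac) (shuffle_ee.mp hbd)
        (by omega) (by omega) (by omega)) id
    | exact shuffle_oo.mpr ((tri_rel (2 : Fin 3) i j).mp
        (h (t3 2 i) (t3 2 j) (t3 2 k) (t3 2 l)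
          (Fin.lt_def.mpr (by simp; omega)) (Fin.lt_def.mpr (by simp; omega))
          (Fin.lt_def.mpr (by simp; omega))
          ((tri_rel (2 : Fin 3) i k).mpr (shuffle_oo.mp hac))
          ((tri_rel (2 : Fin 3) j l).mpr (shuffle_oo.mp hbd))))

lemma adm_join_right (h : AdmissibleTuple n 3 ![A, B, C]) :
    IsNoncrossing (shuffle2 A.1 (B.1 ⊔ C.1)) := by
  have hF : IsNoncrossing ((B.1 ⊔ C.1 : Setoid (Fin n))) := join_noncrossing (adm_BC h)
  intro w x y z h1 h2 h3 hac hbd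
  have h1 := Fin.lt_def.mp h1
  have h2 := Fin.lt_def.mp h2
  have h3 := Fin.lt_def.mp h3
  rcases ev_or_od w with ⟨i, rfl⟩|⟨i, rfl⟩ <;> rcases ev_or_od x with ⟨j, rfl⟩|⟨j, rfl⟩ <;>
    rcases ev_or_od y with ⟨k, rfl⟩|⟨k, rfl⟩ <;> rcases ev_or_od z with ⟨l, rfl⟩|⟨l, rfl⟩ <;>
    simp only [ev_val, od_val] at h1 h2 h3 <;>
    first
    | exact absurd hac shuffle_eo
    | exact absurd ((shuffle2 A.1 (B.1 ⊔ C.1)).symm' hac) shuffle_eo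
    | exact absurd hbd shuffle_eo
    | exact absurd ((shuffle2 A.1 (B.1 ⊔ C.1)).symm' hbd) shuffle_eo
    | exact shuffle_ee.mpr ((tri_rel (0 : Fin 3) i j).mp
        (h (t3 0 i) (t3 0 j) (t3 0 k) (t3 0 l)
          (Fin.lt_def.mpr (by simp; omega)) (Fin.lt_def.mpr (by simp; omega))
          (Fin.lt_def.mpr (by simp; omega))
          ((tri_rel (0 : Fin 3) i k).mpr (shuffle_ee.mp hac))
          ((tri_rel (0 : Fin 3) j l).mpr (shuffle_ee.mp hbd))))
    | exact absurd (cross_AF h (shuffle_ee.mp hac) (shuffle_oo.mp hbd)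
        (by omega) (by omega) (by omega)) id
    | exact absurd (cross_FA h (shuffle_oo.mp hac) (shuffle_ee.mp hbd)
        (by omega) (by omega) (by omega)) id
    | exact shuffle_oo.mpr (hF i j k l (Fin.lt_def.mpr (by omega)) (Fin.lt_def.mpr (by omega))
        (Fin.lt_def.mpr (by omega)) (shuffle_oo.mp hac) (shuffle_oo.mp hbd))

end Triple

end NCPaux
/-- **Statement 16.** If `(α, β, γ)` is an `n`-admissible triple in `NCP(n)`,
then `K_{α∘β∘γ}(α∘β) = γ = K_{K_{α∘β∘γ}(α)}(K_{α∘β}(α))`. -/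
theorem relKreweras_of_admissible_triple (n : ℕ) (α β γ : NCP n)
    (h : AdmissibleTuple n 3 ![α, β, γ]) :
    relKreweras (comp (comp α β) γ) (comp α β) = γ ∧
    γ = relKreweras (relKreweras (comp (comp α β) γ) α) (relKreweras (comp α β) α) := by
  have hAB := NCPaux.adm_AB h
  have hBC := NCPaux.adm_BC h
  have hABC : Admissible2 (comp α β) γ := by
    show IsNoncrossing (shuffle2 (comp α β).1 γ.1)
    rw [NCPaux.comp_eq hAB]
    exact NCPaux.adm_join_left h
  have hA_BC : Admissible2 α (comp β γ) := by
    show IsNoncrossing (shuffle2 α.1 (comp β γ).1)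
    rw [NCPaux.comp_eq hBC]
    exact NCPaux.adm_join_right h
  have e1 : (comp α (comp β γ)).1 = α.1 ⊔ (β.1 ⊔ γ.1) := by
    rw [congrArg Subtype.val (NCPaux.comp_eq hA_BC)]
    show α.1 ⊔ (comp β γ).1 = _
    rw [congrArg Subtype.val (NCPaux.comp_eq hBC)]
  have e2 : (comp (comp α β) γ).1 = (α.1 ⊔ β.1) ⊔ γ.1 := by
    rw [congrArg Subtype.val (NCPaux.comp_eq hABC)]
    show (comp α β).1 ⊔ γ.1 = _
    rw [congrArg Subtype.val (NCPaux.comp_eq hAB)]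
  have hassoc : comp α (comp β γ) = comp (comp α β) γ :=
    Subtype.ext (by rw [e1, e2, sup_assoc])
  refine ⟨NCPaux.relKreweras_eval hABC rfl, ?_⟩
  rw [NCPaux.relKreweras_eval hA_BC hassoc, NCPaux.relKreweras_eval hAB rfl,
    NCPaux.relKreweras_eval hBC rfl]
end
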